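/- arXiv:math/0101039 — 3 statements merged into one kernel-verified Lean document; each statement's English description precedes it below -/
import Mathlib

section
/- Let A be a finite-dimensional Hopf algebra over a field k with bijective antipode S, and let D(A) be its Drinfel'd double with R-matrix R = Σᵢ (ε⊗eᵢ)⊗(eⁱ⊗1). Identify D(A)* with A⊗A* via the pairing ⟨a⊗f, p⊗x⟩ = p(a)f(x). Then the product of D(A)*_R, namely (b⊗g)·(a⊗f) = Σ (R²⇀(a⊗f))(R¹⇀(b⊗g)) (juxtaposition denoting the convolution product of D(A)* and ⇀ the left regular action of D(A) on D(A)*), is given by (b⊗g)·(a⊗f) = Σ b(g₁⇀a) ⊗ g₂f; that is, D(A)*_R equals the Heisenberg double ℋ(A) = A#A*. -/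
open TensorProduct LinearMap

noncomputable section

section RegularActions

variable {k A : Type*} [Field k] [Ring A] [Algebra k A]

/-- Left regular action of `A` on its dual: `(a ⇀ p)(x) = p (x * a)`. -/
def lact (a : A) (p : Module.Dual k A) : Module.Dual k A :=
  p ∘ₗ LinearMap.mulRight k a

/-- Right regular action of `A` on its dual: `(p ↼ a)(x) = p (a * x)`. -/
def ract (a : A) (p : Module.Dual k A) : Module.Dual k A :=
  p ∘ₗ LinearMap.mulLeft k a

end RegularActions

section Double

variable {k A : Type*} [Field k] [Ring A] [HopfAlgebra k A]

/-- The convolution product on `A*`: `(f g)(a) = Σ f(a₁) g(a₂)`. -/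
def conv (f g : Module.Dual k A) : Module.Dual k A :=
  LinearMap.mul' k k ∘ₗ TensorProduct.map f g ∘ₗ (Coalgebra.comul (R := k) (A := A))

/-- Left regular action of `A*` on `A`: `p ⇀ a = Σ p(a₂) a₁`. -/
def lactA (q : Module.Dual k A) (a : A) : A :=
  TensorProduct.rid k A (LinearMap.lTensor A q (Coalgebra.comul (R := k) a))

/-- The pairing of `A ⊗ A*` with `A* ⊗ A` (first argument a fixed pure tensor):
`⟨a ⊗ f, p ⊗ x⟩ = p(a) f(x)`. -/
def pr (a : A) (f : Module.Dual k A) : Module.Dual k A ⊗[k] A →ₗ[k] k :=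
  TensorProduct.lift (LinearMap.mk₂ k (fun (p : Module.Dual k A) (x : A) => p a * f x)
    (fun p p' x => by simp [add_mul])
    (fun c p x => by simp [smul_eq_mul]; ring)
    (fun p x x' => by simp [mul_add])
    (fun c p x => by simp [smul_eq_mul]; ring))

/-- The pairing of `A ⊗ A*` with `A* ⊗ A` (second argument a fixed pure tensor):
`⟨a ⊗ f, p ⊗ x⟩ = p(a) f(x)`. -/
def prR (p : Module.Dual k A) (x : A) : A ⊗[k] Module.Dual k A →ₗ[k] k :=
  TensorProduct.lift (LinearMap.mk₂ k (fun (a : A) (f : Module.Dual k A) => p a * f x)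
    (fun a a' f => by simp [add_mul])
    (fun c a f => by simp [smul_eq_mul]; ring)
    (fun a f f' => by simp [mul_add])
    (fun c a f => by simp [smul_eq_mul]; ring))

lemma pr_add_left (a a' : A) (f : Module.Dual k A) :
    pr (k := k) (a + a') f = pr a f + pr a' f := by
  apply TensorProduct.ext'
  intro p x
  simp [pr, add_mul]

lemma pr_smul_left (c : k) (a : A) (f : Module.Dual k A) :
    pr (k := k) (c • a) f = c • pr a f := by
  apply TensorProduct.ext'
  intro p x
  simp [pr, smul_eq_mul]
  ring

lemma pr_add_right (a : A) (f f' : Module.Dual k A) :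
    pr (k := k) a (f + f') = pr a f + pr a f' := by
  apply TensorProduct.ext'
  intro p x
  simp [pr, mul_add]

lemma pr_smul_right (c : k) (a : A) (f : Module.Dual k A) :
    pr (k := k) a (c • f) = c • pr a f := by
  apply TensorProduct.ext'
  intro p x
  simp [pr, smul_eq_mul]
  ring

variable (k A)

/-- `Sinv` is the inverse of the antipode of `A`. -/
def IsAntipodeInverse (Sinv : A →ₗ[k] A) : Prop :=
  (∀ a : A, HopfAlgebra.antipode (R := k) (Sinv a) = a)
  ∧ (∀ a : A, Sinv (HopfAlgebra.antipode (R := k) a) = a)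

/-- `mulD` is the multiplication of the Drinfel'd double `D(A) = A* ⊗ A`:
`(p ⊗ a)(p' ⊗ a') = Σ p · (a₁ ⇀ p' ↼ S⁻¹(a₃)) ⊗ a₂ a'`. -/
def IsDoubleMul (Sinv : A →ₗ[k] A)
    (mulD : Module.Dual k A ⊗[k] A →ₗ[k] Module.Dual k A ⊗[k] A →ₗ[k]
      Module.Dual k A ⊗[k] A) : Prop :=
  ∀ (p p' : Module.Dual k A) (a a' : A) (n : ℕ) (a₁ a₂ a₃ : Fin n → A),
    rTensor A (Coalgebra.comul (R := k)) (Coalgebra.comul (R := k) a)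
      = ∑ i, (a₁ i ⊗ₜ[k] a₂ i) ⊗ₜ[k] a₃ i →
    mulD (p ⊗ₜ[k] a) (p' ⊗ₜ[k] a')
      = ∑ i, conv p (lact (a₁ i) (ract (Sinv (a₃ i)) p')) ⊗ₜ[k] (a₂ i * a')

/-- `comulD` is the comultiplication of the Drinfel'd double `D(A) = A* ⊗ A`
(that of `A*ᶜᵒᵖ ⊗ A`): `Δ(p ⊗ a) = Σ (p₂ ⊗ a₁) ⊗ (p₁ ⊗ a₂)`. -/
def IsDoubleComul
    (comulD : Module.Dual k A ⊗[k] A →ₗ[k]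
      (Module.Dual k A ⊗[k] A) ⊗[k] (Module.Dual k A ⊗[k] A)) : Prop :=
  ∀ (p : Module.Dual k A) (a : A) (n m : ℕ)
    (p₁ p₂ : Fin n → Module.Dual k A) (a₁ a₂ : Fin m → A),
    (∀ x y : A, ∑ i, p₁ i x * p₂ i y = p (x * y)) →
    Coalgebra.comul (R := k) a = ∑ j, a₁ j ⊗ₜ[k] a₂ j →
    comulD (p ⊗ₜ[k] a)
      = ∑ i, ∑ j, (p₂ i ⊗ₜ[k] a₁ j) ⊗ₜ[k] (p₁ i ⊗ₜ[k] a₂ j)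

variable {k A}

/-- The factorization map `Q : D(A)* → D(A)`, `Q(φ) = Σ φ(R² r¹) R¹ r²`, where
`D(A)*` is identified with `A ⊗ A*` and `R = Σᵢ (ε ⊗ eᵢ) ⊗ (eⁱ ⊗ 1)`. -/
def QD {ι : Type*} [Fintype ι] (e : Module.Basis ι k A)
    (mulD : Module.Dual k A ⊗[k] A →ₗ[k] Module.Dual k A ⊗[k] A →ₗ[k]
      Module.Dual k A ⊗[k] A) :
    A ⊗[k] Module.Dual k A →ₗ[k] Module.Dual k A ⊗[k] A :=
  TensorProduct.lift (LinearMap.mk₂ k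
    (fun (a : A) (f : Module.Dual k A) =>
      ∑ i, ∑ j, pr a f
          (mulD (e.coord i ⊗ₜ[k] (1 : A))
            ((Coalgebra.counit (R := k) (A := A) : Module.Dual k A) ⊗ₜ[k] e j))
        • mulD ((Coalgebra.counit (R := k) (A := A) : Module.Dual k A) ⊗ₜ[k] e i)
            (e.coord j ⊗ₜ[k] (1 : A)))
    (fun a a' f => by simp [pr_add_left, add_smul, Finset.sum_add_distrib])
    (fun c a f => by simp [pr_smul_left, mul_smul, Finset.smul_sum])
    (fun a f f' => by simp [pr_add_right, add_smul, Finset.sum_add_distrib])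
    (fun c a f => by simp [pr_smul_right, mul_smul, Finset.smul_sum]))

end Double

section Aux
open Coalgebra
namespace HDAux
variable {k : Type*} [Field k]

lemma exists_fin2 {M N : Type*} [AddCommMonoid M] [AddCommMonoid N] [Module k M] [Module k N]
    (t : M ⊗[k] N) : ∃ (n : ℕ) (u : Fin n → M) (v : Fin n → N), t = ∑ i, u i ⊗ₜ[k] v i := by
  obtain ⟨S, hS⟩ := TensorProduct.exists_finset t
  refine ⟨S.card, fun i => ((S.equivFin.symm i : S) : M × N).1,
    fun i => ((S.equivFin.symm i : S) : M × N).2, ?_⟩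
  calc t = ∑ i ∈ S, i.1 ⊗ₜ[k] i.2 := hS
    _ = ∑ x : S, (x : M × N).1 ⊗ₜ[k] (x : M × N).2 := (Finset.sum_coe_sort _ _).symm
    _ = _ := (Equiv.sum_comp S.equivFin.symm
        (fun x : S => (x : M × N).1 ⊗ₜ[k] (x : M × N).2)).symm

lemma exists_fin3 {M N P : Type*} [AddCommMonoid M] [AddCommMonoid N] [AddCommMonoid P]
    [Module k M] [Module k N] [Module k P] (t : (M ⊗[k] N) ⊗[k] P) :
    ∃ (n : ℕ) (u : Fin n → M) (v : Fin n → N) (w : Fin n → P),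
      t = ∑ i, (u i ⊗ₜ[k] v i) ⊗ₜ[k] w i := by
  induction t with
  | zero => exact ⟨0, ![], ![], ![], by simp⟩
  | tmul uv w =>
      obtain ⟨n, u, v, h⟩ := exists_fin2 (k := k) uv
      exact ⟨n, u, v, fun _ => w, by rw [h, TensorProduct.sum_tmul]⟩
  | add t₁ t₂ h₁ h₂ =>
      obtain ⟨n₁, u₁, v₁, w₁, e₁⟩ := h₁
      obtain ⟨n₂, u₂, v₂, w₂, e₂⟩ := h₂
      refine ⟨n₁ + n₂, Fin.append u₁ u₂, Fin.append v₁ v₂, Fin.append w₁ w₂, ?_⟩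
      rw [Fin.sum_univ_add]
      simp only [Fin.append_left, Fin.append_right]
      rw [e₁, e₂]

variable {A : Type*} [Ring A] [HopfAlgebra k A]

open Coalgebra

lemma repr_smul_right {y : A} {κ : Type*} (r : Coalgebra.Repr k y κ) :
    ∑ i ∈ r.index, counit (R := k) (r.left i) • r.right i = y := by
  have := congrArg (TensorProduct.lid k A) (Coalgebra.sum_counit_tmul_eq r)
  simpa only [map_sum, TensorProduct.lid_tmul, one_smul] using this

lemma repr_smul_left {y : A} {κ : Type*} (r : Coalgebra.Repr k y κ) :
    ∑ i ∈ r.index, counit (R := k) (r.right i) • r.left i = y := by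
  have := congrArg (TensorProduct.rid k A) (Coalgebra.sum_tmul_counit_eq r)
  simpa only [map_sum, TensorProduct.rid_tmul, one_smul] using this

private lemma reprMul_eq {a b : A} {κ κ' : Type*} (ra : Coalgebra.Repr k a κ) (rb : Coalgebra.Repr k b κ') :
    ∑ p ∈ ra.index ×ˢ rb.index,
      (ra.left p.1 * rb.left p.2) ⊗ₜ[k] (ra.right p.1 * rb.right p.2)
    = Coalgebra.comul (R := k) (a * b) := by
  rw [Finset.sum_product]
  rw [show Coalgebra.comul (R := k) (a * b) = comul a * comul b from Bialgebra.comul_mul a b,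
    ← ra.eq, ← rb.eq, Finset.sum_mul_sum]
  exact Finset.sum_congr rfl fun i _ => Finset.sum_congr rfl fun j _ =>
    (Algebra.TensorProduct.tmul_mul_tmul _ _ _ _).symm

/-- Product of two representations. -/
def reprMul {a b : A} {κ κ' : Type*} (ra : Coalgebra.Repr k a κ) (rb : Coalgebra.Repr k b κ') :
    Coalgebra.Repr k (a * b) (κ × κ') where
  index := ra.index ×ˢ rb.index
  left := fun p => ra.left p.1 * rb.left p.2
  right := fun p => ra.right p.1 * rb.right p.2
  eq := reprMul_eq ra rb

/-- Trilinear multiplication helper. -/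
def tri (L₁ L₂ L₃ : A →ₗ[k] A) : A ⊗[k] (A ⊗[k] A) →ₗ[k] A :=
  LinearMap.mul' k A ∘ₗ map L₁ (LinearMap.mul' k A ∘ₗ map L₂ L₃)

@[simp] lemma tri_apply (L₁ L₂ L₃ : A →ₗ[k] A) (u v w : A) :
    tri L₁ L₂ L₃ (u ⊗ₜ[k] (v ⊗ₜ[k] w)) = L₁ u * (L₂ v * L₃ w) := by
  simp [tri]

lemma tri_coassoc {a : A} {κ κ₁ κ₂ : Type*} (r : Coalgebra.Repr k a κ)
    (r₁ : ∀ i : κ, Coalgebra.Repr k (r.left i) κ₁)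
    (r₂ : ∀ i : κ, Coalgebra.Repr k (r.right i) κ₂) (L₁ L₂ L₃ : A →ₗ[k] A) :
    ∑ i ∈ r.index, ∑ j ∈ (r₁ i).index,
        L₁ ((r₁ i).left j) * (L₂ ((r₁ i).right j) * L₃ (r.right i))
      = ∑ i ∈ r.index, ∑ j ∈ (r₂ i).index,
        L₁ (r.left i) * (L₂ ((r₂ i).left j) * L₃ ((r₂ i).right j)) := by
  have h := Coalgebra.sum_tmul_tmul_eq r r₁ r₂
  have h2 := congrArg (tri L₁ L₂ L₃) h
  simpa only [map_sum, tri_apply] using h2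

lemma antipode_one : HopfAlgebra.antipode (R := k) (A := A) 1 = 1 := by
  have h := HopfAlgebra.mul_antipode_rTensor_comul_apply (R := k) (A := A) (a := 1)
  rw [Bialgebra.comul_one, Algebra.TensorProduct.one_def] at h
  simpa using h

lemma counit_antipode (u : A) :
    counit (R := k) (HopfAlgebra.antipode (R := k) u) = counit (R := k) u := by
  classical
  set S := HopfAlgebra.antipode (R := k) (A := A)
  let r := ℛ k u
  have h1 : ∑ i ∈ r.index, S (r.left i) * r.right i = counit (R := k) u • 1 :=
    HopfAlgebra.sum_antipode_mul_eq_smul r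
  have h2 := congrArg (counit (R := k) (A := A)) h1
  simp only [map_sum, map_smul, Bialgebra.counit_mul, Bialgebra.counit_one,
    smul_eq_mul, mul_one] at h2
  calc counit (R := k) (S u)
      = counit (R := k) (S (∑ i ∈ r.index, counit (R := k) (r.right i) • r.left i)) := by
        rw [repr_smul_left r]
    _ = ∑ i ∈ r.index, counit (R := k) (r.right i) * counit (R := k) (S (r.left i)) := by
        simp [map_sum, map_smul, smul_eq_mul]
    _ = ∑ i ∈ r.index, counit (R := k) (S (r.left i)) * counit (R := k) (r.right i) := by
        simp [mul_comm]
    _ = counit (R := k) u := h2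

lemma antipode_anti (a b : A) :
    HopfAlgebra.antipode (R := k) (a * b)
      = HopfAlgebra.antipode (R := k) b * HopfAlgebra.antipode (R := k) (A := A) a := by
  classical
  set S := HopfAlgebra.antipode (R := k) (A := A) with hS
  symm
  let ra := ℛ k a; let rb := ℛ k b
  let rla : ∀ i, Coalgebra.Repr k (ra.left i) (A × A) := fun i => ℛ k (ra.left i)
  let rra : ∀ i, Coalgebra.Repr k (ra.right i) (A × A) := fun i => ℛ k (ra.right i)
  let rlb : ∀ p, Coalgebra.Repr k (rb.left p) (A × A) := fun p => ℛ k (rb.left p)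
  let rrb : ∀ p, Coalgebra.Repr k (rb.right p) (A × A) := fun p => ℛ k (rb.right p)
  have st1 : S b * S a = ∑ p ∈ rb.index, ∑ i ∈ ra.index,
      (counit (R := k) (ra.left i) * counit (R := k) (rb.left p)) •
        (S (rb.right p) * S (ra.right i)) := by
    conv_lhs => rw [← repr_smul_right rb, ← repr_smul_right ra]
    rw [map_sum, map_sum, Finset.sum_mul_sum]
    refine Finset.sum_congr rfl fun p _ => Finset.sum_congr rfl fun i _ => ?_
    rw [map_smul, map_smul, smul_mul_assoc, mul_smul_comm, smul_smul, mul_comm]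
  have st2 : ∀ p ∈ rb.index, ∀ i ∈ ra.index,
      (counit (R := k) (ra.left i) * counit (R := k) (rb.left p)) •
        (S (rb.right p) * S (ra.right i))
      = ∑ q ∈ (rla i).index, ∑ s ∈ (rlb p).index,
          S ((rla i).left q * (rlb p).left s) *
            (((rla i).right q * (rlb p).right s) * (S (rb.right p) * S (ra.right i))) := by
    intro p _ i _
    have h := HopfAlgebra.sum_antipode_mul_eq_smul (reprMul (rla i) (rlb p))
    have h2 := congrArg (fun z => z * (S (rb.right p) * S (ra.right i))) h
    simp only [Finset.sum_mul, smul_mul_assoc, one_mul] at h2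
    rw [show (counit (R := k) (ra.left i * rb.left p))
        = counit (R := k) (ra.left i) * counit (R := k) (rb.left p) from
        Bialgebra.counit_mul _ _] at h2
    rw [← h2, reprMul, Finset.sum_product]
    refine Finset.sum_congr rfl fun q _ => Finset.sum_congr rfl fun s _ => ?_
    rw [mul_assoc]
  -- E2 : reorder to (p, s, i, q) and right-associate
  have e2 : S b * S a = ∑ p ∈ rb.index, ∑ s ∈ (rlb p).index, ∑ i ∈ ra.index,
      ∑ q ∈ (rla i).index,
      S ((rla i).left q * (rlb p).left s) *
        ((rla i).right q * ((rlb p).right s * (S (rb.right p) * S (ra.right i)))) := by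
    rw [st1, Finset.sum_congr rfl fun p hp => Finset.sum_congr rfl fun i hi => st2 p hp i hi]
    refine Finset.sum_congr rfl fun p _ => ?_
    rw [Finset.sum_congr rfl fun i (_ : i ∈ ra.index) =>
      (Finset.sum_comm (s := (rla i).index) (t := (rlb p).index))]
    rw [Finset.sum_comm]
    refine Finset.sum_congr rfl fun s _ => Finset.sum_congr rfl fun i _ =>
      Finset.sum_congr rfl fun q _ => ?_
    rw [mul_assoc]
  -- E3 : coassociativity on the a-legs
  have e3 : S b * S a = ∑ p ∈ rb.index, ∑ s ∈ (rlb p).index, ∑ i ∈ ra.index,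
      ∑ j ∈ (rra i).index,
      S (ra.left i * (rlb p).left s) *
        ((rra i).left j * ((rlb p).right s * (S (rb.right p) * S ((rra i).right j)))) := by
    rw [e2]
    refine Finset.sum_congr rfl fun p _ => Finset.sum_congr rfl fun s _ => ?_
    have h := tri_coassoc ra rla rra
      (S ∘ₗ LinearMap.mulRight k ((rlb p).left s)) LinearMap.id
      (LinearMap.mulLeft k ((rlb p).right s) ∘ₗ LinearMap.mulLeft k (S (rb.right p)) ∘ₗ S)
    simpa only [LinearMap.comp_apply, LinearMap.mulRight_apply, LinearMap.mulLeft_apply,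
      LinearMap.id_coe, id_eq] using h
  -- E3' : reorder to (i, j, p, s) and re-associate for the b-step
  have e3' : S b * S a = ∑ i ∈ ra.index, ∑ j ∈ (rra i).index, ∑ p ∈ rb.index,
      ∑ s ∈ (rlb p).index,
      S (ra.left i * (rlb p).left s) *
        (((rra i).left j * (rlb p).right s) * (S (rb.right p) * S ((rra i).right j))) := by
    rw [e3]
    rw [Finset.sum_congr rfl fun p (_ : p ∈ rb.index) =>
      (Finset.sum_comm (s := (rlb p).index) (t := ra.index))]
    rw [Finset.sum_comm]
    refine Finset.sum_congr rfl fun i _ => ?_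
    rw [Finset.sum_congr rfl fun p (_ : p ∈ rb.index) =>
      (Finset.sum_comm (s := (rlb p).index) (t := (rra i).index))]
    rw [Finset.sum_comm]
    refine Finset.sum_congr rfl fun j _ => Finset.sum_congr rfl fun p _ =>
      Finset.sum_congr rfl fun s _ => ?_
    rw [mul_assoc]
  -- E4 : coassociativity on the b-legs
  have e4 : S b * S a = ∑ i ∈ ra.index, ∑ j ∈ (rra i).index, ∑ p ∈ rb.index,
      ∑ t ∈ (rrb p).index,
      S (ra.left i * rb.left p) *
        (((rra i).left j * (rrb p).left t) * (S ((rrb p).right t) * S ((rra i).right j))) := by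
    rw [e3']
    refine Finset.sum_congr rfl fun i _ => Finset.sum_congr rfl fun j _ => ?_
    have h := tri_coassoc rb rlb rrb
      (S ∘ₗ LinearMap.mulLeft k (ra.left i)) (LinearMap.mulLeft k ((rra i).left j))
      (LinearMap.mulRight k (S ((rra i).right j)) ∘ₗ S)
    simpa only [LinearMap.comp_apply, LinearMap.mulRight_apply, LinearMap.mulLeft_apply,
      LinearMap.id_coe, id_eq] using h
  -- E5 : cancel the inner-most b-legs
  have e5 : S b * S a = ∑ i ∈ ra.index, ∑ j ∈ (rra i).index, ∑ p ∈ rb.index,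
      counit (R := k) (rb.right p) •
        (S (ra.left i * rb.left p) * ((rra i).left j * S ((rra i).right j))) := by
    rw [e4]
    refine Finset.sum_congr rfl fun i _ => Finset.sum_congr rfl fun j _ =>
      Finset.sum_congr rfl fun p _ => ?_
    have hin : ∑ t ∈ (rrb p).index,
        ((rra i).left j * (rrb p).left t) * (S ((rrb p).right t) * S ((rra i).right j))
        = counit (R := k) (rb.right p) • ((rra i).left j * S ((rra i).right j)) :=
      calc ∑ t ∈ (rrb p).index,
          ((rra i).left j * (rrb p).left t) * (S ((rrb p).right t) * S ((rra i).right j))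
          = ∑ t ∈ (rrb p).index,
              (rra i).left j * (((rrb p).left t * S ((rrb p).right t)) * S ((rra i).right j)) := by
            refine Finset.sum_congr rfl fun t _ => ?_
            rw [mul_assoc, mul_assoc]
        _ = (rra i).left j *
              ((∑ t ∈ (rrb p).index, (rrb p).left t * S ((rrb p).right t)) *
                S ((rra i).right j)) := by
            rw [← Finset.mul_sum, Finset.sum_mul]
        _ = counit (R := k) (rb.right p) • ((rra i).left j * S ((rra i).right j)) := by
            rw [HopfAlgebra.sum_mul_antipode_eq_smul (rrb p), smul_mul_assoc, one_mul,
              mul_smul_comm]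
    rw [← Finset.mul_sum, hin, mul_smul_comm]
  -- E6 : collapse the p-sum
  have e6 : S b * S a = ∑ i ∈ ra.index, ∑ j ∈ (rra i).index,
      S (ra.left i * b) * ((rra i).left j * S ((rra i).right j)) := by
    rw [e5]
    refine Finset.sum_congr rfl fun i _ => Finset.sum_congr rfl fun j _ => ?_
    calc ∑ p ∈ rb.index, counit (R := k) (rb.right p) •
          (S (ra.left i * rb.left p) * ((rra i).left j * S ((rra i).right j)))
        = (∑ p ∈ rb.index, S (ra.left i * (counit (R := k) (rb.right p) • rb.left p))) *
            ((rra i).left j * S ((rra i).right j)) := by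
          rw [Finset.sum_mul]
          refine Finset.sum_congr rfl fun p _ => ?_
          rw [mul_smul_comm, map_smul, smul_mul_assoc]
      _ = S (ra.left i * b) * ((rra i).left j * S ((rra i).right j)) := by
          rw [← map_sum, ← Finset.mul_sum, repr_smul_left rb]
  -- E7/E8 : collapse the remaining sums
  calc S b * S a
      = ∑ i ∈ ra.index, counit (R := k) (ra.right i) • S (ra.left i * b) := by
        rw [e6]
        refine Finset.sum_congr rfl fun i _ => ?_
        rw [← Finset.mul_sum, HopfAlgebra.sum_mul_antipode_eq_smul (rra i),
          mul_smul_comm, mul_one]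
    _ = S (a * b) := by
        rw [show ∑ i ∈ ra.index, counit (R := k) (ra.right i) • S (ra.left i * b)
            = S (∑ i ∈ ra.index, (counit (R := k) (ra.right i) • ra.left i) * b) by
          rw [map_sum]
          exact Finset.sum_congr rfl fun i _ => by rw [smul_mul_assoc, map_smul]]
        rw [← Finset.sum_mul, repr_smul_left ra]

section Part3
variable {k A : Type*} [Field k] [Ring A] [HopfAlgebra k A]

lemma lact_apply' (c : A) (p : Module.Dual k A) (x : A) : lact c p x = p (x * c) := rfl

lemma ract_apply' (c : A) (p : Module.Dual k A) (x : A) : ract c p x = p (c * x) := rfl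

lemma pr_tmul (a : A) (f p : Module.Dual k A) (x : A) :
    pr a f (p ⊗ₜ[k] x) = p a * f x := by
  simp [pr]

lemma prR_tmul (p : Module.Dual k A) (x a : A) (f : Module.Dual k A) :
    prR p x (a ⊗ₜ[k] f) = p a * f x := by
  simp [prR]

lemma conv_apply_fin (u v : Module.Dual k A) (w : A) {n : ℕ} {w₁ w₂ : Fin n → A}
    (h : Coalgebra.comul (R := k) w = ∑ i, w₁ i ⊗ₜ[k] w₂ i) :
    conv u v w = ∑ i, u (w₁ i) * v (w₂ i) := by
  simp only [conv, LinearMap.comp_apply, h, map_sum, TensorProduct.map_tmul,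
    LinearMap.mul'_apply, smul_eq_mul]

lemma lactA_apply_fin (q : Module.Dual k A) (a : A) {n : ℕ} {a₁ a₂ : Fin n → A}
    (h : Coalgebra.comul (R := k) a = ∑ i, a₁ i ⊗ₜ[k] a₂ i) :
    lactA q a = ∑ i, q (a₂ i) • a₁ i := by
  simp only [lactA, h, map_sum, LinearMap.lTensor_tmul, TensorProduct.rid_tmul]

lemma counit_Sinv (Sinv : A →ₗ[k] A) (hSinv : IsAntipodeInverse k A Sinv) (z : A) :
    Coalgebra.counit (R := k) (Sinv z) = Coalgebra.counit (R := k) z := by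
  rw [← counit_antipode (Sinv z), hSinv.1 z]

lemma lact_ract_counit (c z : A) :
    lact c (ract z (Coalgebra.counit (R := k) (A := A) : Module.Dual k A))
      = (Coalgebra.counit (R := k) z * Coalgebra.counit (R := k) c) •
        (Coalgebra.counit (R := k) (A := A) : Module.Dual k A) := by
  refine LinearMap.ext fun w => ?_
  simp only [lact, ract, LinearMap.comp_apply, LinearMap.mulRight_apply,
    LinearMap.mulLeft_apply, LinearMap.smul_apply, smul_eq_mul, Bialgebra.counit_mul]
  ring

lemma conv_counit_right (q : Module.Dual k A) :
    conv q (Coalgebra.counit (R := k) (A := A) : Module.Dual k A) = q := by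
  classical
  refine LinearMap.ext fun w => ?_
  let r := ℛ k w
  simp only [conv, LinearMap.comp_apply, ← r.eq, map_sum, TensorProduct.map_tmul,
    LinearMap.mul'_apply, smul_eq_mul]
  calc ∑ i ∈ r.index, q (r.left i) * Coalgebra.counit (R := k) (r.right i)
      = q (∑ i ∈ r.index, Coalgebra.counit (R := k) (r.right i) • r.left i) := by
        rw [map_sum]
        exact Finset.sum_congr rfl fun i _ => by rw [map_smul, smul_eq_mul, mul_comm]
    _ = q w := by rw [repr_smul_left r]

lemma conv_smul_right (q v : Module.Dual k A) (c : k) :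
    conv q (c • v) = c • conv q v := by
  refine LinearMap.ext fun w => ?_
  simp only [conv, LinearMap.comp_apply, TensorProduct.map_smul_right, LinearMap.smul_apply,
    map_smul]

lemma eps_mid {y : A} {n : ℕ} {c₁ c₂ c₃ : Fin n → A}
    (h : rTensor A (Coalgebra.comul (R := k)) (Coalgebra.comul (R := k) y)
      = ∑ i, (c₁ i ⊗ₜ[k] c₂ i) ⊗ₜ[k] c₃ i) :
    ∑ i, (Coalgebra.counit (R := k) (c₃ i) * Coalgebra.counit (R := k) (c₁ i)) • c₂ i = y := by
  classical
  let Θ : (A ⊗[k] A) ⊗[k] A →ₗ[k] A :=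
    ↑(TensorProduct.rid k A) ∘ₗ lTensor A (Coalgebra.counit (R := k)) ∘ₗ
      rTensor A (↑(TensorProduct.lid k A) ∘ₗ rTensor A (Coalgebra.counit (R := k)))
  have hΘ := congrArg Θ h
  have hpure : ∀ (u v w : A), Θ ((u ⊗ₜ[k] v) ⊗ₜ[k] w)
      = (Coalgebra.counit (R := k) w * Coalgebra.counit (R := k) u) • v := by
    intro u v w
    simp only [Θ, LinearMap.comp_apply, LinearMap.rTensor_tmul, LinearMap.lTensor_tmul,
      LinearEquiv.coe_coe, TensorProduct.lid_tmul, TensorProduct.rid_tmul, map_smul,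
      TensorProduct.smul_tmul', smul_smul]
  rw [map_sum] at hΘ
  simp only [hpure] at hΘ
  rw [← hΘ]
  let r := ℛ k y
  rw [← r.eq, map_sum, map_sum]
  calc ∑ i ∈ r.index, Θ (rTensor A (Coalgebra.comul (R := k)) (r.left i ⊗ₜ[k] r.right i))
      = ∑ i ∈ r.index, Coalgebra.counit (R := k) (r.right i) • r.left i := by
        refine Finset.sum_congr rfl fun i _ => ?_
        simp only [LinearMap.rTensor_tmul, Θ, LinearMap.comp_apply, LinearEquiv.coe_coe,
          Coalgebra.rTensor_counit_comul, TensorProduct.lid_tmul, one_smul,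
          LinearMap.lTensor_tmul, TensorProduct.rid_tmul]
    _ = y := repr_smul_left r

lemma sum_mul_Sinv (Sinv : A →ₗ[k] A) (hSinv : IsAntipodeInverse k A Sinv)
    {y : A} {κ : Type*} (r : Coalgebra.Repr k y κ) :
    ∑ i ∈ r.index, r.right i * Sinv (r.left i) = Coalgebra.counit (R := k) y • 1 := by
  have hinj : Function.Injective (HopfAlgebra.antipode (R := k) (A := A)) :=
    Function.LeftInverse.injective hSinv.2
  apply hinj
  rw [map_sum, map_smul, antipode_one]
  calc ∑ i ∈ r.index, HopfAlgebra.antipode (R := k) (r.right i * Sinv (r.left i))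
      = ∑ i ∈ r.index, r.left i * HopfAlgebra.antipode (R := k) (r.right i) := by
        refine Finset.sum_congr rfl fun i _ => ?_
        rw [antipode_anti, hSinv.1]
    _ = Coalgebra.counit (R := k) y • 1 := HopfAlgebra.sum_mul_antipode_eq_smul r

lemma mulD_eps (Sinv : A →ₗ[k] A) (hSinv : IsAntipodeInverse k A Sinv)
    (mulD : Module.Dual k A ⊗[k] A →ₗ[k] Module.Dual k A ⊗[k] A →ₗ[k]
      Module.Dual k A ⊗[k] A)
    (hmulD : IsDoubleMul k A Sinv mulD) (q : Module.Dual k A) (y z : A) :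
    mulD (q ⊗ₜ[k] y) ((Coalgebra.counit (R := k) (A := A) : Module.Dual k A) ⊗ₜ[k] z)
      = q ⊗ₜ[k] (y * z) := by
  obtain ⟨n, c₁, c₂, c₃, h⟩ := exists_fin3 (k := k)
    (rTensor A (Coalgebra.comul (R := k)) (Coalgebra.comul (R := k) y))
  rw [hmulD q _ y z n c₁ c₂ c₃ h]
  calc ∑ i, conv q (lact (c₁ i) (ract (Sinv (c₃ i))
          (Coalgebra.counit (R := k) (A := A) : Module.Dual k A))) ⊗ₜ[k] (c₂ i * z)
      = ∑ i, q ⊗ₜ[k] (((Coalgebra.counit (R := k) (c₃ i) *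
          Coalgebra.counit (R := k) (c₁ i)) • c₂ i) * z) := by
        refine Finset.sum_congr rfl fun i _ => ?_
        rw [lact_ract_counit, counit_Sinv Sinv hSinv, conv_smul_right, conv_counit_right,
          TensorProduct.smul_tmul, smul_mul_assoc]
    _ = q ⊗ₜ[k] (y * z) := by
        rw [← TensorProduct.tmul_sum, ← Finset.sum_mul, eps_mid h]

end Part3

section Part4
variable {k A : Type*} [Field k] [Ring A] [HopfAlgebra k A]

/-- `w ⊗ z ↦ z * Sinv w`. -/
def mS (Sinv : A →ₗ[k] A) : A ⊗[k] A →ₗ[k] A :=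
  LinearMap.mul' k A ∘ₗ map LinearMap.id Sinv ∘ₗ ↑(TensorProduct.comm k A A)

@[simp] lemma mS_tmul (Sinv : A →ₗ[k] A) (w z : A) :
    mS Sinv (w ⊗ₜ[k] z) = z * Sinv w := by
  simp [mS]

lemma mS_comul (Sinv : A →ₗ[k] A) (hSinv : IsAntipodeInverse k A Sinv) (y : A) :
    mS Sinv (Coalgebra.comul (R := k) y) = Coalgebra.counit (R := k) y • 1 := by
  classical
  let r := ℛ k y
  rw [← r.eq, map_sum]
  simp only [mS_tmul]
  exact sum_mul_Sinv Sinv hSinv r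

lemma C1 (Sinv : A →ₗ[k] A) (hSinv : IsAntipodeInverse k A Sinv) (x : A) :
    lTensor (A ⊗[k] A) (mS Sinv)
        (TensorProduct.map (Coalgebra.comul (R := k)) (Coalgebra.comul (R := k))
          (Coalgebra.comul (R := k) x))
      = Coalgebra.comul (R := k) x ⊗ₜ[k] (1 : A) := by
  classical
  let r := ℛ k x
  conv_lhs => rw [← r.eq, map_sum, map_sum]
  calc ∑ i ∈ r.index, lTensor (A ⊗[k] A) (mS Sinv)
        (TensorProduct.map (Coalgebra.comul (R := k)) (Coalgebra.comul (R := k))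
          (r.left i ⊗ₜ[k] r.right i))
      = ∑ i ∈ r.index, (Coalgebra.counit (R := k) (r.right i) •
          Coalgebra.comul (R := k) (r.left i)) ⊗ₜ[k] (1 : A) := by
        refine Finset.sum_congr rfl fun i _ => ?_
        rw [TensorProduct.map_tmul, LinearMap.lTensor_tmul, mS_comul Sinv hSinv,
          TensorProduct.tmul_smul, TensorProduct.smul_tmul']
    _ = Coalgebra.comul (R := k) x ⊗ₜ[k] (1 : A) := by
        rw [← TensorProduct.sum_tmul]
        congr 1
        conv_rhs => rw [← repr_smul_left r]
        rw [map_sum]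
        exact Finset.sum_congr rfl fun i _ => by rw [map_smul]

lemma C2x (x : A) :
    TensorProduct.map (Coalgebra.comul (R := k) (A := A)) (Coalgebra.comul (R := k))
        (Coalgebra.comul (R := k) x)
      = (TensorProduct.assoc k (A ⊗[k] A) A A)
          (rTensor A (rTensor A (Coalgebra.comul (R := k)) ∘ₗ Coalgebra.comul (R := k))
            (Coalgebra.comul (R := k) x)) := by
  have hS1 : (↑(TensorProduct.assoc k (A ⊗[k] A) A A) ∘ₗ
        rTensor A (rTensor A (Coalgebra.comul (R := k) (A := A))) ∘ₗ
        ↑(TensorProduct.assoc k A A A).symm : A ⊗[k] (A ⊗[k] A) →ₗ[k] _)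
      = rTensor (A ⊗[k] A) (Coalgebra.comul (R := k)) := by
    ext u v w
    simp
  have h1 : rTensor A (rTensor A (Coalgebra.comul (R := k) (A := A)) ∘ₗ
        Coalgebra.comul (R := k)) (Coalgebra.comul (R := k) x)
      = rTensor A (rTensor A (Coalgebra.comul (R := k)))
          ((TensorProduct.assoc k A A A).symm
            (lTensor A (Coalgebra.comul (R := k)) (Coalgebra.comul (R := k) x))) := by
    rw [LinearMap.rTensor_comp, LinearMap.comp_apply, Coalgebra.coassoc_symm_apply]
  rw [h1, show (TensorProduct.assoc k (A ⊗[k] A) A A)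
      (rTensor A (rTensor A (Coalgebra.comul (R := k)))
        ((TensorProduct.assoc k A A A).symm
          (lTensor A (Coalgebra.comul (R := k)) (Coalgebra.comul (R := k) x))))
      = rTensor (A ⊗[k] A) (Coalgebra.comul (R := k))
          (lTensor A (Coalgebra.comul (R := k)) (Coalgebra.comul (R := k) x)) from
    LinearMap.congr_fun hS1 _]
  exact (LinearMap.congr_fun (rTensor_comp_lTensor A (Coalgebra.comul (R := k) (A := A))
    (Coalgebra.comul (R := k) (A := A))) _).symm

lemma key_cancel (Sinv : A →ₗ[k] A) (hSinv : IsAntipodeInverse k A Sinv)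
    (φ ψ : Module.Dual k A) (v₀ : A) (x : A)
    {mx : ℕ} {xl xr : Fin mx → A}
    (hx : Coalgebra.comul (R := k) x = ∑ j, xl j ⊗ₜ[k] xr j)
    {N : Fin mx → ℕ} {c₁ c₂ c₃ : (j : Fin mx) → Fin (N j) → A}
    (h3 : ∀ j, rTensor A (Coalgebra.comul (R := k)) (Coalgebra.comul (R := k) (xl j))
      = ∑ t, (c₁ j t ⊗ₜ[k] c₂ j t) ⊗ₜ[k] c₃ j t) :
    ∑ j, ∑ t, ψ (c₂ j t) * φ (xr j * (Sinv (c₃ j t) * (v₀ * c₁ j t)))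
      = ∑ j, ψ (xr j) * φ (v₀ * xl j) := by
  classical
  let G₁ : (A ⊗[k] A) ⊗[k] A →ₗ[k] A ⊗[k] (A ⊗[k] A) :=
    ↑(TensorProduct.assoc k A A A)
  let G₂ : A ⊗[k] (A ⊗[k] A) →ₗ[k] (A ⊗[k] A) ⊗[k] A :=
    ↑(TensorProduct.comm k A (A ⊗[k] A))
  let G : (A ⊗[k] A) ⊗[k] A →ₗ[k] A ⊗[k] A :=
    lTensor A (LinearMap.mul' k A ∘ₗ lTensor A (LinearMap.mulLeft k v₀)) ∘ₗ
      G₁ ∘ₗ G₂ ∘ₗ G₁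
  let F'' : (A ⊗[k] A) ⊗[k] A →ₗ[k] k := LinearMap.mul' k k ∘ₗ TensorProduct.map ψ φ ∘ₗ G
  let F' : (A ⊗[k] A) ⊗[k] (A ⊗[k] A) →ₗ[k] k := F'' ∘ₗ lTensor (A ⊗[k] A) (mS Sinv)
  let F : ((A ⊗[k] A) ⊗[k] A) ⊗[k] A →ₗ[k] k :=
    F' ∘ₗ ↑(TensorProduct.assoc k (A ⊗[k] A) A A)
  have hF'' : ∀ u v c, F'' ((u ⊗ₜ[k] v) ⊗ₜ[k] c) = ψ v * φ (c * (v₀ * u)) := by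
    intro u v c
    simp [F'', G, G₁, G₂, smul_eq_mul]
  have hF : ∀ u v w z, F (((u ⊗ₜ[k] v) ⊗ₜ[k] w) ⊗ₜ[k] z)
      = ψ v * φ (z * (Sinv w * (v₀ * u))) := by
    intro u v w z
    simp only [F, F', LinearMap.comp_apply, LinearEquiv.coe_coe, TensorProduct.assoc_tmul,
      LinearMap.lTensor_tmul, mS_tmul, hF'', mul_assoc]
  have expand : rTensor A (rTensor A (Coalgebra.comul (R := k)) ∘ₗ Coalgebra.comul (R := k))
      (Coalgebra.comul (R := k) x)
      = ∑ j, ∑ t, ((c₁ j t ⊗ₜ[k] c₂ j t) ⊗ₜ[k] c₃ j t) ⊗ₜ[k] xr j := by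
    rw [hx, map_sum]
    refine Finset.sum_congr rfl fun j _ => ?_
    rw [LinearMap.rTensor_tmul, LinearMap.comp_apply, h3 j, TensorProduct.sum_tmul]
  calc ∑ j, ∑ t, ψ (c₂ j t) * φ (xr j * (Sinv (c₃ j t) * (v₀ * c₁ j t)))
      = F (rTensor A (rTensor A (Coalgebra.comul (R := k)) ∘ₗ Coalgebra.comul (R := k))
          (Coalgebra.comul (R := k) x)) := by
        rw [expand, map_sum]
        refine Finset.sum_congr rfl fun j _ => ?_
        rw [map_sum]
        exact Finset.sum_congr rfl fun t _ => (hF _ _ _ _).symm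
    _ = F' (TensorProduct.map (Coalgebra.comul (R := k)) (Coalgebra.comul (R := k))
          (Coalgebra.comul (R := k) x)) := by
        rw [C2x x]
        rfl
    _ = F'' (Coalgebra.comul (R := k) x ⊗ₜ[k] (1 : A)) := by
        show F'' (lTensor (A ⊗[k] A) (mS Sinv) _) = _
        rw [C1 Sinv hSinv x]
    _ = ∑ j, ψ (xr j) * φ (v₀ * xl j) := by
        rw [hx, TensorProduct.sum_tmul, map_sum]
        refine Finset.sum_congr rfl fun j _ => ?_
        rw [hF'', one_mul]

end Part4

section Part5
variable {k A : Type*} [Field k] [Ring A] [HopfAlgebra k A] [FiniteDimensional k A]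

lemma prR_repr {ι : Type*} [Fintype ι] [DecidableEq ι] (e : Module.Basis ι k A)
    (u : A ⊗[k] Module.Dual k A) (i j : ι) :
    prR (e.coord i) (e j) u = (e.tensorProduct e.dualBasis).repr u (i, j) := by
  have : prR (e.coord i) (e j) = (e.tensorProduct e.dualBasis).coord (i, j) := by
    apply TensorProduct.ext'
    intro a f
    rw [prR_tmul, Module.Basis.coord_apply, Module.Basis.coord_apply,
      Module.Basis.tensorProduct_repr_tmul_apply, Module.Basis.dualBasis_repr, smul_eq_mul, mul_comm]
  rw [this, Module.Basis.coord_apply]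

lemma sep {ι : Type*} [Fintype ι] (e : Module.Basis ι k A) (u v : A ⊗[k] Module.Dual k A)
    (h : ∀ (p : Module.Dual k A) (x : A), prR p x u = prR p x v) : u = v := by
  classical
  apply (e.tensorProduct e.dualBasis).ext_elem
  rintro ⟨i, j⟩
  rw [← prR_repr e u i j, ← prR_repr e v i j, h]

lemma basis_mul_sum {ι : Type*} [Fintype ι] (e : Module.Basis ι k A) (g : Module.Dual k A)
    (w z : A) : ∑ s, e.repr z s * g (w * e s) = g (w * z) := by
  have h : w * z = ∑ s, e.repr z s • (w * e s) := by
    conv_lhs => rw [← e.sum_repr z, Finset.mul_sum]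
    exact Finset.sum_congr rfl fun s _ => mul_smul_comm _ _ _
  rw [h, map_sum]
  exact Finset.sum_congr rfl fun s _ => by rw [map_smul, smul_eq_mul]

lemma pair_basis_sum {ι : Type*} [Fintype ι] (e : Module.Basis ι k A) (p : Module.Dual k A)
    (u v : A) : ∑ i, p (u * e i) * e.repr v i = p (u * v) := by
  have h : u * v = ∑ i, e.repr v i • (u * e i) := by
    conv_lhs => rw [← e.sum_repr v, Finset.mul_sum]
    exact Finset.sum_congr rfl fun s _ => mul_smul_comm _ _ _
  rw [h, map_sum]
  exact Finset.sum_congr rfl fun s _ => by rw [map_smul, smul_eq_mul, mul_comm]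

end Part5

end HDAux

end Aux

/-- Let `A` be a finite-dimensional Hopf algebra over a field `k` with
bijective antipode, and `D(A) = A* ⊗ A` its Drinfel'd double with R-matrix
`R = Σᵢ (ε ⊗ eᵢ) ⊗ (eⁱ ⊗ 1)`.  Identify `D(A)*` with `A ⊗ A*` via
`⟨a ⊗ f, p ⊗ x⟩ = p(a) f(x)`.  Then the product of `D(A)*_R`, namely
`(b ⊗ g)·(a ⊗ f) = Σ (R² ⇀ (a ⊗ f))(R¹ ⇀ (b ⊗ g))`, is given by
`(b ⊗ g)·(a ⊗ f) = Σ b (g₁ ⇀ a) ⊗ g₂ f`; that is, `D(A)*_R` is the Heisenberg double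
`ℋ(A) = A # A*`. -/
theorem double_dual_R_is_heisenberg
    {k A : Type*} [Field k] [Ring A] [HopfAlgebra k A] [FiniteDimensional k A]
    (Sinv : A →ₗ[k] A) (hSinv : IsAntipodeInverse k A Sinv)
    {ι : Type*} [Fintype ι] (e : Module.Basis ι k A)
    (mulD : Module.Dual k A ⊗[k] A →ₗ[k] Module.Dual k A ⊗[k] A →ₗ[k]
      Module.Dual k A ⊗[k] A)
    (hmulD : IsDoubleMul k A Sinv mulD)
    (comulD : Module.Dual k A ⊗[k] A →ₗ[k]
      (Module.Dual k A ⊗[k] A) ⊗[k] (Module.Dual k A ⊗[k] A))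
    (hcomulD : IsDoubleComul k A comulD)
    -- `mulHR` is the product of `D(A)*_R` carried over to `A ⊗ A*`:
    -- `⟨(b ⊗ g)·(a ⊗ f), p ⊗ x⟩ = Σ ⟨a ⊗ f, (p ⊗ x)₁ R²⟩ ⟨b ⊗ g, (p ⊗ x)₂ R¹⟩`
    (mulHR : A ⊗[k] Module.Dual k A →ₗ[k] A ⊗[k] Module.Dual k A →ₗ[k]
      A ⊗[k] Module.Dual k A)
    (hmulHR : ∀ (b a : A) (g f : Module.Dual k A) (p : Module.Dual k A) (x : A)
      (m : ℕ) (d₁ d₂ : Fin m → Module.Dual k A ⊗[k] A),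
      comulD (p ⊗ₜ[k] x) = ∑ j, d₁ j ⊗ₜ[k] d₂ j →
      prR p x (mulHR (b ⊗ₜ[k] g) (a ⊗ₜ[k] f))
        = ∑ j, ∑ i,
            pr a f (mulD (d₁ j) (e.coord i ⊗ₜ[k] (1 : A)))
              * pr b g (mulD (d₂ j)
                  ((Coalgebra.counit (R := k) (A := A) : Module.Dual k A) ⊗ₜ[k] e i))) :
    ∀ (b a : A) (g f : Module.Dual k A) (n : ℕ) (g₁ g₂ : Fin n → Module.Dual k A),
      (∀ x y : A, ∑ i, g₁ i x * g₂ i y = g (x * y)) →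
      mulHR (b ⊗ₜ[k] g) (a ⊗ₜ[k] f)
        = ∑ i, (b * lactA (g₁ i) a) ⊗ₜ[k] conv (g₂ i) f := by
  classical
  intro b a g f n g₁ g₂ hg
  obtain ⟨na, al, ar, ha⟩ := HDAux.exists_fin2 (k := k) (Coalgebra.comul (R := k) a)
  apply HDAux.sep e
  intro p x
  obtain ⟨mx, xl, xr, hx⟩ := HDAux.exists_fin2 (k := k) (Coalgebra.comul (R := k) x)
  choose N c₁ c₂ c₃ h3 using fun j => HDAux.exists_fin3 (k := k)
    (rTensor A (Coalgebra.comul (R := k)) (Coalgebra.comul (R := k) (xl j)))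
  -- the pair expansion of p
  set σ := Fintype.equivFin ι with hσ
  set p₁ : Fin (Fintype.card ι) → Module.Dual k A := fun t => lact (e (σ.symm t)) p with hp₁
  set p₂ : Fin (Fintype.card ι) → Module.Dual k A := fun t => e.coord (σ.symm t) with hp₂
  have hp : ∀ u v : A, ∑ t, p₁ t u * p₂ t v = p (u * v) := by
    intro u v
    rw [show (∑ t, p₁ t u * p₂ t v)
        = ∑ i : ι, p (u * e i) * e.repr v i from
      Equiv.sum_comp σ.symm (fun i : ι => p (u * e i) * e.repr v i)]
    exact HDAux.pair_basis_sum e p u v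
  have hcD : comulD (p ⊗ₜ[k] x)
      = ∑ t, ∑ j, (p₂ t ⊗ₜ[k] xl j) ⊗ₜ[k] (p₁ t ⊗ₜ[k] xr j) :=
    hcomulD p x (Fintype.card ι) mx p₁ p₂ xl xr hp hx
  -- flatten the double sum
  set E := finProdFinEquiv (m := Fintype.card ι) (n := mx) with hE
  set d₁ : Fin (Fintype.card ι * mx) → Module.Dual k A ⊗[k] A :=
    fun w => p₂ (E.symm w).1 ⊗ₜ[k] xl (E.symm w).2 with hd₁
  set d₂ : Fin (Fintype.card ι * mx) → Module.Dual k A ⊗[k] A :=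
    fun w => p₁ (E.symm w).1 ⊗ₜ[k] xr (E.symm w).2 with hd₂
  have hflat : comulD (p ⊗ₜ[k] x) = ∑ w, d₁ w ⊗ₜ[k] d₂ w := by
    rw [hcD]
    symm
    calc ∑ w, d₁ w ⊗ₜ[k] d₂ w
        = ∑ w, (fun q : Fin (Fintype.card ι) × Fin mx =>
            (p₂ q.1 ⊗ₜ[k] xl q.2) ⊗ₜ[k] (p₁ q.1 ⊗ₜ[k] xr q.2)) (E.symm w) := rfl
      _ = ∑ q : Fin (Fintype.card ι) × Fin mx,
            (p₂ q.1 ⊗ₜ[k] xl q.2) ⊗ₜ[k] (p₁ q.1 ⊗ₜ[k] xr q.2) :=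
          Equiv.sum_comp E.symm (fun q : Fin (Fintype.card ι) × Fin mx =>
            (p₂ q.1 ⊗ₜ[k] xl q.2) ⊗ₜ[k] (p₁ q.1 ⊗ₜ[k] xr q.2))
      _ = ∑ t, ∑ j, (p₂ t ⊗ₜ[k] xl j) ⊗ₜ[k] (p₁ t ⊗ₜ[k] xr j) := Fintype.sum_prod_type _
  have hP := hmulHR b a g f p x _ d₁ d₂ hflat
  rw [hP]
  -- un-flatten
  have hunflat : (∑ w, ∑ i, pr a f (mulD (d₁ w) (e.coord i ⊗ₜ[k] (1 : A)))
        * pr b g (mulD (d₂ w)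
            ((Coalgebra.counit (R := k) (A := A) : Module.Dual k A) ⊗ₜ[k] e i)))
      = ∑ t, ∑ j, ∑ s, pr a f (mulD (p₂ t ⊗ₜ[k] xl j) (e.coord s ⊗ₜ[k] (1 : A)))
        * pr b g (mulD (p₁ t ⊗ₜ[k] xr j)
            ((Coalgebra.counit (R := k) (A := A) : Module.Dual k A) ⊗ₜ[k] e s)) := by
    calc (∑ w, ∑ i, pr a f (mulD (d₁ w) (e.coord i ⊗ₜ[k] (1 : A)))
        * pr b g (mulD (d₂ w)
            ((Coalgebra.counit (R := k) (A := A) : Module.Dual k A) ⊗ₜ[k] e i)))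
        = ∑ w, (fun q : Fin (Fintype.card ι) × Fin mx =>
            ∑ s, pr a f (mulD ((p₂ q.1 ⊗ₜ[k] xl q.2)) (e.coord s ⊗ₜ[k] (1 : A)))
              * pr b g (mulD ((p₁ q.1 ⊗ₜ[k] xr q.2))
                  ((Coalgebra.counit (R := k) (A := A) : Module.Dual k A) ⊗ₜ[k] e s)))
            (E.symm w) := rfl
      _ = ∑ q : Fin (Fintype.card ι) × Fin mx,
            ∑ s, pr a f (mulD ((p₂ q.1 ⊗ₜ[k] xl q.2)) (e.coord s ⊗ₜ[k] (1 : A)))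
              * pr b g (mulD ((p₁ q.1 ⊗ₜ[k] xr q.2))
                  ((Coalgebra.counit (R := k) (A := A) : Module.Dual k A) ⊗ₜ[k] e s)) :=
          Equiv.sum_comp E.symm (fun q : Fin (Fintype.card ι) × Fin mx =>
            ∑ s, pr a f (mulD ((p₂ q.1 ⊗ₜ[k] xl q.2)) (e.coord s ⊗ₜ[k] (1 : A)))
              * pr b g (mulD ((p₁ q.1 ⊗ₜ[k] xr q.2))
                  ((Coalgebra.counit (R := k) (A := A) : Module.Dual k A) ⊗ₜ[k] e s)))
      _ = _ := Fintype.sum_prod_type _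
  rw [hunflat]
  -- evaluate the two factors
  have hT2 : ∀ (t : Fin (Fintype.card ι)) (j : Fin mx) (s : ι),
      pr b g (mulD (p₁ t ⊗ₜ[k] xr j)
          ((Coalgebra.counit (R := k) (A := A) : Module.Dual k A) ⊗ₜ[k] e s))
        = p₁ t b * g (xr j * e s) := by
    intro t j s
    rw [HDAux.mulD_eps Sinv hSinv mulD hmulD, HDAux.pr_tmul]
  have hT1 : ∀ (t : Fin (Fintype.card ι)) (j : Fin mx) (s : ι),
      pr a f (mulD (p₂ t ⊗ₜ[k] xl j) (e.coord s ⊗ₜ[k] (1 : A)))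
        = ∑ u, ∑ r, p₂ t (al r) *
            (e.repr (Sinv (c₃ j u) * (ar r * c₁ j u)) s * f (c₂ j u)) := by
    intro t j s
    rw [hmulD (p₂ t) (e.coord s) (xl j) 1 (N j) (c₁ j) (c₂ j) (c₃ j) (h3 j), map_sum]
    refine Finset.sum_congr rfl fun u _ => ?_
    rw [HDAux.pr_tmul, mul_one,
      HDAux.conv_apply_fin _ _ a ha, Finset.sum_mul]
    refine Finset.sum_congr rfl fun r _ => ?_
    rw [HDAux.lact_apply', HDAux.ract_apply', Module.Basis.coord_apply, mul_assoc]
    rfl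
  -- evaluate the right-hand side
  have hR : prR p x (∑ i, (b * lactA (g₁ i) a) ⊗ₜ[k] conv (g₂ i) f)
      = ∑ r, ∑ j, p (b * al r) * (f (xr j) * g (ar r * xl j)) := by
    rw [map_sum]
    calc ∑ i, prR p x ((b * lactA (g₁ i) a) ⊗ₜ[k] conv (g₂ i) f)
        = ∑ i, (∑ r, g₁ i (ar r) * p (b * al r)) * (∑ j, g₂ i (xl j) * f (xr j)) := by
          refine Finset.sum_congr rfl fun i _ => ?_
          rw [HDAux.prR_tmul, HDAux.conv_apply_fin _ _ x hx,
            HDAux.lactA_apply_fin _ _ ha]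
          congr 1
          rw [Finset.mul_sum, map_sum]
          exact Finset.sum_congr rfl fun r _ => by
            rw [mul_smul_comm, map_smul, smul_eq_mul]
      _ = ∑ i, ∑ r, ∑ j, (g₁ i (ar r) * g₂ i (xl j)) * (p (b * al r) * f (xr j)) := by
          refine Finset.sum_congr rfl fun i _ => ?_
          rw [Finset.sum_mul]
          refine Finset.sum_congr rfl fun r _ => ?_
          rw [Finset.mul_sum]
          exact Finset.sum_congr rfl fun j _ => by ring
      _ = ∑ r, ∑ j, (∑ i, g₁ i (ar r) * g₂ i (xl j)) * (p (b * al r) * f (xr j)) := by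
          rw [Finset.sum_comm]
          refine Finset.sum_congr rfl fun r _ => ?_
          rw [Finset.sum_comm]
          exact Finset.sum_congr rfl fun j _ => (Finset.sum_mul _ _ _).symm
      _ = ∑ r, ∑ j, p (b * al r) * (f (xr j) * g (ar r * xl j)) := by
          refine Finset.sum_congr rfl fun r _ => Finset.sum_congr rfl fun j _ => ?_
          rw [hg (ar r) (xl j)]
          ring
  rw [hR]
  -- evaluate the left-hand side
  calc ∑ t, ∑ j, ∑ s, pr a f (mulD (p₂ t ⊗ₜ[k] xl j) (e.coord s ⊗ₜ[k] (1 : A)))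
        * pr b g (mulD (p₁ t ⊗ₜ[k] xr j)
            ((Coalgebra.counit (R := k) (A := A) : Module.Dual k A) ⊗ₜ[k] e s))
      = ∑ t, ∑ j, ∑ s, ∑ u, ∑ r, (p₁ t b * p₂ t (al r)) *
          (f (c₂ j u) * (e.repr (Sinv (c₃ j u) * (ar r * c₁ j u)) s * g (xr j * e s))) := by
        refine Finset.sum_congr rfl fun t _ => Finset.sum_congr rfl fun j _ =>
          Finset.sum_congr rfl fun s _ => ?_
        rw [hT1 t j s, hT2 t j s, Finset.sum_mul]
        refine Finset.sum_congr rfl fun u _ => ?_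
        rw [Finset.sum_mul]
        exact Finset.sum_congr rfl fun r _ => by ring
    _ = ∑ t, ∑ j, ∑ u, ∑ r, (p₁ t b * p₂ t (al r)) *
          (f (c₂ j u) * g (xr j * (Sinv (c₃ j u) * (ar r * c₁ j u)))) := by
        refine Finset.sum_congr rfl fun t _ => Finset.sum_congr rfl fun j _ => ?_
        rw [Finset.sum_comm]
        refine Finset.sum_congr rfl fun u _ => ?_
        rw [Finset.sum_comm]
        refine Finset.sum_congr rfl fun r _ => ?_
        rw [← Finset.mul_sum]
        congr 1
        rw [← Finset.mul_sum]
        congr 1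
        exact HDAux.basis_mul_sum e g (xr j) (Sinv (c₃ j u) * (ar r * c₁ j u))
    _ = ∑ j, ∑ u, ∑ r, p (b * al r) *
          (f (c₂ j u) * g (xr j * (Sinv (c₃ j u) * (ar r * c₁ j u)))) := by
        rw [Finset.sum_comm]
        refine Finset.sum_congr rfl fun j _ => ?_
        rw [Finset.sum_comm]
        refine Finset.sum_congr rfl fun u _ => ?_
        rw [Finset.sum_comm]
        refine Finset.sum_congr rfl fun r _ => ?_
        rw [← Finset.sum_mul, hp b (al r)]
    _ = ∑ r, ∑ j, ∑ u, p (b * al r) *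
          (f (c₂ j u) * g (xr j * (Sinv (c₃ j u) * (ar r * c₁ j u)))) := by
        rw [Finset.sum_comm]
        refine Finset.sum_congr rfl fun r _ => Finset.sum_comm
    _ = ∑ r, p (b * al r) *
          (∑ j, ∑ u, f (c₂ j u) * g (xr j * (Sinv (c₃ j u) * (ar r * c₁ j u)))) := by
        refine Finset.sum_congr rfl fun r _ => ?_
        rw [Finset.mul_sum]
        exact Finset.sum_congr rfl fun j _ => (Finset.mul_sum _ _ _).symm
    _ = ∑ r, p (b * al r) * (∑ j, f (xr j) * g (ar r * xl j)) := by
        refine Finset.sum_congr rfl fun r _ => ?_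
        rw [HDAux.key_cancel Sinv hSinv g f (ar r) x hx h3]
    _ = ∑ r, ∑ j, p (b * al r) * (f (xr j) * g (ar r * xl j)) := by
        exact Finset.sum_congr rfl fun r _ => Finset.mul_sum _ _ _
end
end

section
/- Let A be a finite-dimensional Hopf algebra over a field k with bijective antipode S, D(A) its Drinfel'd double with R-matrix R = Σᵢ (ε⊗eᵢ)⊗(eⁱ⊗1), and identify D(A)* with A⊗A* via ⟨a⊗f, p⊗x⟩ = p(a)f(x). Then the map Q : D(A)* → D(A), Q(φ) = Σ φ(R²r¹) R¹r² (with R = r) is given explicitly by Q(a⊗p) = Σ (a₁⇀p↼S⁻¹(a₃)) ⊗ a₂, and it is bijective with inverse Q⁻¹ : D(A) → D(A)*, Q⁻¹(p⊗a) = Σ a₂ ⊗ (S⁻¹(a₁)⇀p↼a₃); in particular D(A) is factorizable. -/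
open TensorProduct LinearMap

noncomputable section

section Aux

open Coalgebra

variable {k A : Type*} [Field k] [Ring A] [HopfAlgebra k A]

/-! ### Regular action lemmas -/

@[simp] lemma lact_apply (a : A) (p : Module.Dual k A) (x : A) : lact a p x = p (x * a) := rfl
@[simp] lemma ract_apply (a : A) (p : Module.Dual k A) (x : A) : ract a p x = p (a * x) := rfl

lemma lact_one (p : Module.Dual k A) : lact (1 : A) p = p := by ext x; simp
lemma ract_one (p : Module.Dual k A) : ract (1 : A) p = p := by ext x; simp

lemma lact_add_left (a b : A) (p : Module.Dual k A) :
    lact (k := k) (a + b) p = lact a p + lact b p := by ext x; simp [mul_add]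
lemma lact_smul_left (c : k) (a : A) (p : Module.Dual k A) :
    lact (c • a) p = c • lact a p := by ext x; simp
lemma ract_add_left (a b : A) (p : Module.Dual k A) :
    ract (k := k) (a + b) p = ract a p + ract b p := by ext x; simp [add_mul]
lemma ract_smul_left (c : k) (a : A) (p : Module.Dual k A) :
    ract (c • a) p = c • ract a p := by ext x; simp
lemma lact_add_right (a : A) (p q : Module.Dual k A) :
    lact (k := k) a (p + q) = lact a p + lact a q := by ext x; simp
lemma lact_smul_right (c : k) (a : A) (p : Module.Dual k A) :
    lact a (c • p) = c • lact a p := by ext x; simp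
lemma ract_add_right (a : A) (p q : Module.Dual k A) :
    ract (k := k) a (p + q) = ract a p + ract a q := by ext x; simp
lemma ract_smul_right (c : k) (a : A) (p : Module.Dual k A) :
    ract a (c • p) = c • ract a p := by ext x; simp

/-- The key composition lemma for the two-sided regular actions. -/
lemma act_act (u w x z : A) (p : Module.Dual k A) :
    lact u (ract w (lact x (ract z p))) = lact (u * x) (ract (z * w) p) := by
  ext m; simp [mul_assoc]

/-! ### Counit sum lemmas -/

lemma sum_counit_smul_right {a : A} {ιr : Type*} (r : Coalgebra.Repr k a ιr) :
    ∑ i ∈ r.index, counit (R := k) (r.left i) • r.right i = a := by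
  calc ∑ i ∈ r.index, counit (R := k) (r.left i) • r.right i
      = TensorProduct.lid k A (∑ i ∈ r.index, counit (R := k) (r.left i) ⊗ₜ[k] r.right i) := by
        rw [map_sum]; simp
    _ = a := by rw [Coalgebra.sum_counit_tmul_eq r]; simp

lemma sum_counit_smul_left {a : A} {ιr : Type*} (r : Coalgebra.Repr k a ιr) :
    ∑ i ∈ r.index, counit (R := k) (r.right i) • r.left i = a := by
  calc ∑ i ∈ r.index, counit (R := k) (r.right i) • r.left i
      = TensorProduct.rid k A (∑ i ∈ r.index, r.left i ⊗ₜ[k] counit (R := k) (r.right i)) := by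
        rw [map_sum]; simp
    _ = a := by rw [Coalgebra.sum_tmul_counit_eq r]; simp

/-! ### Convolution lemmas -/

lemma conv_apply_repr (f g : Module.Dual k A) {x : A} {ιr : Type*} (r : Coalgebra.Repr k x ιr) :
    conv f g x = ∑ i ∈ r.index, f (r.left i) * g (r.right i) := by
  simp only [conv, LinearMap.comp_apply, ← r.eq, map_sum, TensorProduct.map_tmul,
    LinearMap.mul'_apply]

lemma conv_counit_left (p : Module.Dual k A) :
    conv (Coalgebra.counit (R := k) (A := A) : Module.Dual k A) p = p := by
  ext x
  rw [conv_apply_repr _ _ (Coalgebra.Repr.arbitrary k x)]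
  calc ∑ i ∈ (Coalgebra.Repr.arbitrary k x).index,
        counit ((ℛ k x).left i) * p ((ℛ k x).right i)
      = p (∑ i ∈ (ℛ k x).index, counit (R := k) ((ℛ k x).left i) • (ℛ k x).right i) := by
        rw [map_sum]; simp [smul_eq_mul]
    _ = p x := by rw [sum_counit_smul_right]

lemma conv_counit_right (p : Module.Dual k A) :
    conv p (Coalgebra.counit (R := k) (A := A) : Module.Dual k A) = p := by
  ext x
  rw [conv_apply_repr _ _ (Coalgebra.Repr.arbitrary k x)]
  calc ∑ i ∈ (ℛ k x).index, p ((ℛ k x).left i) * counit ((ℛ k x).right i)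
      = p (∑ i ∈ (ℛ k x).index, counit (R := k) ((ℛ k x).right i) • (ℛ k x).left i) := by
        rw [map_sum]; simp [smul_eq_mul, mul_comm]
    _ = p x := by rw [sum_counit_smul_left]

end Aux

section Aux2

open Coalgebra

variable {k A : Type*} [Field k] [Ring A] [HopfAlgebra k A]

/-- Product of two representations: a representation of `a * b`. -/
noncomputable def reprMul {a b : A} {ιr κr : Type*} (r : Coalgebra.Repr k a ιr)
    (s : Coalgebra.Repr k b κr) :
    Coalgebra.Repr k (a * b) (ιr × κr) where
  index := r.index ×ˢ s.index
  left := fun ij => r.left ij.1 * s.left ij.2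
  right := fun ij => r.right ij.1 * s.right ij.2
  eq := by
    rw [Bialgebra.comul_mul, ← r.eq, ← s.eq, Finset.sum_mul_sum]
    rw [Finset.sum_product]
    simp [Algebra.TensorProduct.tmul_mul_tmul]

lemma antipode_one' : HopfAlgebra.antipode (R := k) (1 : A) = 1 := by
  have h := HopfAlgebra.mul_antipode_rTensor_comul_apply (R := k) (A := A) 1
  rw [Bialgebra.comul_one, Algebra.TensorProduct.one_def] at h
  simpa using h

/-- Six-fold collapse map used in the proof of anti-multiplicativity of the antipode. -/
noncomputable def psiL : ((A ⊗[k] A) ⊗[k] A) ⊗[k] ((A ⊗[k] A) ⊗[k] A) →ₗ[k] A :=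
  LinearMap.mul' k A ∘ₗ
    TensorProduct.map
      (LinearMap.mul' k A ∘ₗ
        TensorProduct.map (HopfAlgebra.antipode k ∘ₗ LinearMap.mul' k A) (LinearMap.mul' k A) ∘ₗ
        (TensorProduct.tensorTensorTensorComm k A A A A).toLinearMap)
      (LinearMap.mul' k A ∘ₗ
        TensorProduct.map (HopfAlgebra.antipode (R := k) (A := A)) (HopfAlgebra.antipode k) ∘ₗ
        (TensorProduct.comm k A A).toLinearMap) ∘ₗ
    (TensorProduct.tensorTensorTensorComm k (A ⊗[k] A) A (A ⊗[k] A) A).toLinearMap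

lemma psiL_tmul (x y z u v w : A) :
    psiL (k := k) (((x ⊗ₜ[k] y) ⊗ₜ[k] z) ⊗ₜ[k] ((u ⊗ₜ[k] v) ⊗ₜ[k] w)) =
      (HopfAlgebra.antipode (R := k) (x * u) * (y * v)) *
        (HopfAlgebra.antipode (R := k) w * HopfAlgebra.antipode (R := k) z) := by
  simp [psiL]

/-- Version of `psiL` for right-nested triples. -/
noncomputable def psiR : (A ⊗[k] (A ⊗[k] A)) ⊗[k] (A ⊗[k] (A ⊗[k] A)) →ₗ[k] A :=
  psiL ∘ₗ TensorProduct.map (TensorProduct.assoc k A A A).symm.toLinearMap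
    (TensorProduct.assoc k A A A).symm.toLinearMap

lemma psiR_tmul (x y z u v w : A) :
    psiR (k := k) ((x ⊗ₜ[k] (y ⊗ₜ[k] z)) ⊗ₜ[k] (u ⊗ₜ[k] (v ⊗ₜ[k] w))) =
      (HopfAlgebra.antipode (R := k) (x * u) * (y * v)) *
        (HopfAlgebra.antipode (R := k) w * HopfAlgebra.antipode (R := k) z) := by
  simp [psiR, psiL_tmul]

lemma psiR_helper (x u c d : A) :
    psiR ((x ⊗ₜ[k] Coalgebra.comul c) ⊗ₜ[k] (u ⊗ₜ[k] Coalgebra.comul d)) =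
      (counit (R := k) c * counit (R := k) d) • HopfAlgebra.antipode (R := k) (x * u) := by
  classical
  calc psiR ((x ⊗ₜ[k] Coalgebra.comul c) ⊗ₜ[k] (u ⊗ₜ[k] Coalgebra.comul d))
      = ∑ t ∈ (ℛ k c).index, ∑ v ∈ (ℛ k d).index,
          psiR ((x ⊗ₜ[k] ((ℛ k c).left t ⊗ₜ[k] (ℛ k c).right t)) ⊗ₜ[k]
            (u ⊗ₜ[k] ((ℛ k d).left v ⊗ₜ[k] (ℛ k d).right v))) := by
        rw [← (ℛ k c).eq, ← (ℛ k d).eq]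
        simp only [TensorProduct.tmul_sum, TensorProduct.sum_tmul, map_sum]
        rw [Finset.sum_comm]
    _ = ∑ t ∈ (ℛ k c).index, ∑ v ∈ (ℛ k d).index,
          HopfAlgebra.antipode (R := k) (x * u) * ((ℛ k c).left t *
            (((ℛ k d).left v * HopfAlgebra.antipode (R := k) ((ℛ k d).right v)) *
              HopfAlgebra.antipode (R := k) ((ℛ k c).right t))) := by
        simp only [psiR_tmul, mul_assoc]
    _ = ∑ t ∈ (ℛ k c).index,
          HopfAlgebra.antipode (R := k) (x * u) * ((ℛ k c).left t *
            ((counit (R := k) d • (1 : A)) *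
              HopfAlgebra.antipode (R := k) ((ℛ k c).right t))) := by
        refine Finset.sum_congr rfl fun t _ => ?_
        rw [← Finset.mul_sum, ← Finset.mul_sum, ← Finset.sum_mul,
          HopfAlgebra.sum_mul_antipode_eq_smul (ℛ k d)]
    _ = counit (R := k) d • ∑ t ∈ (ℛ k c).index,
          HopfAlgebra.antipode (R := k) (x * u) * ((ℛ k c).left t *
            HopfAlgebra.antipode (R := k) ((ℛ k c).right t)) := by
        rw [Finset.smul_sum]
        refine Finset.sum_congr rfl fun t _ => ?_
        simp [smul_mul_assoc, mul_smul_comm]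
    _ = (counit (R := k) c * counit (R := k) d) • HopfAlgebra.antipode (R := k) (x * u) := by
        rw [← Finset.mul_sum, HopfAlgebra.sum_mul_antipode_eq_smul (ℛ k c)]
        simp [mul_smul_comm, smul_smul, mul_comm (counit (R := k) d)]

lemma psiL_helper (z w c d : A) :
    psiL ((Coalgebra.comul c ⊗ₜ[k] z) ⊗ₜ[k] (Coalgebra.comul d ⊗ₜ[k] w)) =
      (counit (R := k) c * counit (R := k) d) •
        (HopfAlgebra.antipode (R := k) w * HopfAlgebra.antipode (R := k) z) := by
  classical
  calc psiL ((Coalgebra.comul c ⊗ₜ[k] z) ⊗ₜ[k] (Coalgebra.comul d ⊗ₜ[k] w))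
      = ∑ t ∈ (ℛ k c).index, ∑ v ∈ (ℛ k d).index,
          psiL ((((ℛ k c).left t ⊗ₜ[k] (ℛ k c).right t) ⊗ₜ[k] z) ⊗ₜ[k]
            (((ℛ k d).left v ⊗ₜ[k] (ℛ k d).right v) ⊗ₜ[k] w)) := by
        rw [← (ℛ k c).eq, ← (ℛ k d).eq]
        simp only [TensorProduct.tmul_sum, TensorProduct.sum_tmul, map_sum]
        rw [Finset.sum_comm]
    _ = ∑ t ∈ (ℛ k c).index, ∑ v ∈ (ℛ k d).index,
          (HopfAlgebra.antipode (R := k) ((ℛ k c).left t * (ℛ k d).left v) *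
            ((ℛ k c).right t * (ℛ k d).right v)) *
          (HopfAlgebra.antipode (R := k) w * HopfAlgebra.antipode (R := k) z) := by
        simp only [psiL_tmul]
    _ = (∑ tv ∈ (reprMul (ℛ k c) (ℛ k d)).index,
          HopfAlgebra.antipode (R := k) ((reprMul (ℛ k c) (ℛ k d)).left tv) *
            (reprMul (ℛ k c) (ℛ k d)).right tv) *
          (HopfAlgebra.antipode (R := k) w * HopfAlgebra.antipode (R := k) z) := by
        rw [Finset.sum_mul]
        exact (Finset.sum_product ((ℛ k c).index) ((ℛ k d).index)
          (fun tv => HopfAlgebra.antipode (R := k) ((reprMul (ℛ k c) (ℛ k d)).left tv) *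
            (reprMul (ℛ k c) (ℛ k d)).right tv *
            (HopfAlgebra.antipode (R := k) w * HopfAlgebra.antipode (R := k) z))).symm
    _ = (counit (R := k) c * counit (R := k) d) •
        (HopfAlgebra.antipode (R := k) w * HopfAlgebra.antipode (R := k) z) := by
        rw [HopfAlgebra.sum_antipode_mul_eq_smul (reprMul (ℛ k c) (ℛ k d))]
        rw [Bialgebra.counit_mul, smul_mul_assoc, one_mul]

set_option maxHeartbeats 1600000 in
theorem antipode_mul' (a b : A) :
    HopfAlgebra.antipode (R := k) (a * b) =
      HopfAlgebra.antipode (R := k) b * HopfAlgebra.antipode (R := k) a := by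
  classical
  have bridge : psiR ((LinearMap.lTensor A Coalgebra.comul (Coalgebra.comul a)) ⊗ₜ[k]
        (LinearMap.lTensor A Coalgebra.comul (Coalgebra.comul b)))
      = psiL ((LinearMap.rTensor A Coalgebra.comul (Coalgebra.comul a)) ⊗ₜ[k]
        (LinearMap.rTensor A Coalgebra.comul (Coalgebra.comul b))) := by
    rw [← Coalgebra.coassoc_apply a, ← Coalgebra.coassoc_apply b]
    rw [psiR, LinearMap.comp_apply, TensorProduct.map_tmul]
    simp only [LinearEquiv.coe_coe, LinearEquiv.symm_apply_apply]
  have wayR : psiR ((LinearMap.lTensor A Coalgebra.comul (Coalgebra.comul a)) ⊗ₜ[k]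
        (LinearMap.lTensor A Coalgebra.comul (Coalgebra.comul b)))
      = HopfAlgebra.antipode (R := k) (a * b) := by
    rw [← (ℛ k a).eq, ← (ℛ k b).eq, map_sum, map_sum]
    simp only [LinearMap.lTensor_tmul]
    simp only [TensorProduct.tmul_sum, TensorProduct.sum_tmul, map_sum]
    rw [Finset.sum_comm]
    calc ∑ i ∈ (ℛ k a).index, ∑ j ∈ (ℛ k b).index,
          psiR (((ℛ k a).left i ⊗ₜ[k] Coalgebra.comul ((ℛ k a).right i)) ⊗ₜ[k]
            ((ℛ k b).left j ⊗ₜ[k] Coalgebra.comul ((ℛ k b).right j)))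
        = ∑ i ∈ (ℛ k a).index, ∑ j ∈ (ℛ k b).index,
            HopfAlgebra.antipode (R := k)
              ((counit (R := k) ((ℛ k a).right i) • (ℛ k a).left i) *
               (counit (R := k) ((ℛ k b).right j) • (ℛ k b).left j)) := by
          refine Finset.sum_congr rfl fun i _ => Finset.sum_congr rfl fun j _ => ?_
          rw [psiR_helper, smul_mul_smul_comm, map_smul]
      _ = HopfAlgebra.antipode (R := k)
            ((∑ i ∈ (ℛ k a).index, counit (R := k) ((ℛ k a).right i) • (ℛ k a).left i) *
             (∑ j ∈ (ℛ k b).index, counit (R := k) ((ℛ k b).right j) • (ℛ k b).left j)) := by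
          rw [Finset.sum_mul_sum]
          simp only [map_sum]
      _ = HopfAlgebra.antipode (R := k) (a * b) := by
          rw [sum_counit_smul_left (ℛ k a), sum_counit_smul_left (ℛ k b)]
  have wayL : psiL ((LinearMap.rTensor A Coalgebra.comul (Coalgebra.comul a)) ⊗ₜ[k]
        (LinearMap.rTensor A Coalgebra.comul (Coalgebra.comul b)))
      = HopfAlgebra.antipode (R := k) b * HopfAlgebra.antipode (R := k) a := by
    rw [← (ℛ k a).eq, ← (ℛ k b).eq, map_sum, map_sum]
    simp only [LinearMap.rTensor_tmul]
    simp only [TensorProduct.tmul_sum, TensorProduct.sum_tmul, map_sum]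
    rw [Finset.sum_comm]
    calc ∑ i ∈ (ℛ k a).index, ∑ j ∈ (ℛ k b).index,
          psiL ((Coalgebra.comul ((ℛ k a).left i) ⊗ₜ[k] (ℛ k a).right i) ⊗ₜ[k]
            (Coalgebra.comul ((ℛ k b).left j) ⊗ₜ[k] (ℛ k b).right j))
        = ∑ i ∈ (ℛ k a).index, ∑ j ∈ (ℛ k b).index,
            HopfAlgebra.antipode (R := k)
                (counit (R := k) ((ℛ k b).left j) • (ℛ k b).right j) *
              HopfAlgebra.antipode (R := k)
                (counit (R := k) ((ℛ k a).left i) • (ℛ k a).right i) := by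
          refine Finset.sum_congr rfl fun i _ => Finset.sum_congr rfl fun j _ => ?_
          rw [psiL_helper, map_smul, map_smul, smul_mul_smul_comm, mul_comm]
      _ = HopfAlgebra.antipode (R := k)
            (∑ j ∈ (ℛ k b).index, counit (R := k) ((ℛ k b).left j) • (ℛ k b).right j) *
          HopfAlgebra.antipode (R := k)
            (∑ i ∈ (ℛ k a).index, counit (R := k) ((ℛ k a).left i) • (ℛ k a).right i) := by
          rw [Finset.sum_comm, map_sum, map_sum, Finset.sum_mul_sum]
      _ = HopfAlgebra.antipode (R := k) b * HopfAlgebra.antipode (R := k) a := by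
          rw [sum_counit_smul_right (ℛ k a), sum_counit_smul_right (ℛ k b)]
  rw [← wayR, bridge, wayL]

/-- Inverse-antipode collapse: `∑ x₂ S⁻¹(x₁) = ε(x) 1`. -/
lemma sum_mul_Sinv (Sinv : A →ₗ[k] A) (hS : IsAntipodeInverse k A Sinv) {x : A} {ιr : Type*}
    (r : Coalgebra.Repr k x ιr) :
    ∑ i ∈ r.index, r.right i * Sinv (r.left i) = counit (R := k) x • 1 := by
  have hinj : Function.Injective (HopfAlgebra.antipode (R := k) (A := A)) :=
    Function.LeftInverse.injective hS.2
  apply hinj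
  rw [map_smul, antipode_one', map_sum]
  calc ∑ i ∈ r.index, HopfAlgebra.antipode (R := k) (r.right i * Sinv (r.left i))
      = ∑ i ∈ r.index, r.left i * HopfAlgebra.antipode (R := k) (r.right i) := by
        refine Finset.sum_congr rfl fun i _ => ?_
        rw [antipode_mul', hS.1]
    _ = counit (R := k) x • 1 := HopfAlgebra.sum_mul_antipode_eq_smul r

lemma Sinv_one (Sinv : A →ₗ[k] A) (hS : IsAntipodeInverse k A Sinv) : Sinv 1 = 1 := by
  have := hS.2 1
  rwa [antipode_one'] at this

end Aux2

section Aux3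

open Coalgebra

variable {k A : Type*} [Field k] [Ring A] [HopfAlgebra k A]

/-- Extensionality for maps out of a right-nested triple tensor product. -/
lemma ext_threefold_right {M N P Q : Type*} [AddCommMonoid M] [AddCommMonoid N]
    [AddCommMonoid P] [AddCommMonoid Q] [Module k M] [Module k N] [Module k P] [Module k Q]
    {f g : M ⊗[k] (N ⊗[k] P) →ₗ[k] Q}
    (h : ∀ x y z, f (x ⊗ₜ[k] (y ⊗ₜ[k] z)) = g (x ⊗ₜ[k] (y ⊗ₜ[k] z))) : f = g := by
  have h2 : f ∘ₗ (TensorProduct.assoc k M N P).toLinearMap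
      = g ∘ₗ (TensorProduct.assoc k M N P).toLinearMap :=
    TensorProduct.ext_threefold fun x y z => by simpa using h x y z
  refine LinearMap.ext fun t => ?_
  have := LinearMap.congr_fun h2 ((TensorProduct.assoc k M N P).symm t)
  simpa using this

/-- The collapse map `x ⊗ y ↦ y * S⁻¹(x)`. -/
noncomputable def gmap (Sinv : A →ₗ[k] A) : A ⊗[k] A →ₗ[k] A :=
  LinearMap.mul' k A ∘ₗ (TensorProduct.comm k A A).toLinearMap ∘ₗ LinearMap.rTensor A Sinv

@[simp] lemma gmap_tmul (Sinv : A →ₗ[k] A) (x y : A) :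
    gmap Sinv (x ⊗ₜ[k] y) = y * Sinv x := by
  simp [gmap]

/-- The twice-iterated comultiplication, left-nested. -/
noncomputable def D2 : A →ₗ[k] (A ⊗[k] A) ⊗[k] A :=
  LinearMap.rTensor A (Coalgebra.comul (R := k)) ∘ₗ Coalgebra.comul (R := k)

lemma D2_apply (a : A) :
    D2 (k := k) a = LinearMap.rTensor A (Coalgebra.comul (R := k)) (Coalgebra.comul a) := rfl

/-- `C1` as a map identity: `g ∘ Δ = η ∘ ε`. -/
lemma gmap_comp_comul (Sinv : A →ₗ[k] A) (hS : IsAntipodeInverse k A Sinv) :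
    gmap Sinv ∘ₗ Coalgebra.comul (R := k)
      = Algebra.linearMap k A ∘ₗ Coalgebra.counit (R := k) := by
  refine LinearMap.ext fun a => ?_
  rw [LinearMap.comp_apply, LinearMap.comp_apply, ← (ℛ k a).eq, map_sum]
  simp only [gmap_tmul]
  rw [sum_mul_Sinv Sinv hS (ℛ k a)]
  rw [Algebra.linearMap_apply, Algebra.algebraMap_eq_smul_one]

/-- First collapse identity: `(g ⊗ id) ∘ Δ₂ = (1 ⊗ ·)`. -/
lemma L1M (Sinv : A →ₗ[k] A) (hS : IsAntipodeInverse k A Sinv) :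
    LinearMap.rTensor A (gmap Sinv) ∘ₗ D2 (k := k) (A := A)
      = (TensorProduct.mk k A A) 1 := by
  refine LinearMap.ext fun a => ?_
  rw [LinearMap.comp_apply, D2_apply, ← (ℛ k a).eq, map_sum, map_sum]
  simp only [LinearMap.rTensor_tmul]
  calc ∑ i ∈ (ℛ k a).index, gmap Sinv (Coalgebra.comul ((ℛ k a).left i)) ⊗ₜ[k] (ℛ k a).right i
      = ∑ i ∈ (ℛ k a).index,
          (1 : A) ⊗ₜ[k] (counit (R := k) ((ℛ k a).left i) • (ℛ k a).right i) := by
        refine Finset.sum_congr rfl fun i _ => ?_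
        have := LinearMap.congr_fun (gmap_comp_comul Sinv hS) ((ℛ k a).left i)
        rw [LinearMap.comp_apply, LinearMap.comp_apply] at this
        rw [this, Algebra.linearMap_apply, Algebra.algebraMap_eq_smul_one]
        rw [TensorProduct.smul_tmul]
    _ = (1 : A) ⊗ₜ[k] a := by
        rw [← TensorProduct.tmul_sum, sum_counit_smul_right (ℛ k a)]
    _ = (TensorProduct.mk k A A) 1 a := rfl

/-- The bilinear two-sided action map `m ⊗ n ↦ (m ⇀ p ↼ n)`. -/
noncomputable def psiAct (p : Module.Dual k A) : A ⊗[k] A →ₗ[k] Module.Dual k A :=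
  TensorProduct.lift (LinearMap.mk₂ k (fun m n => lact m (ract n p))
    (fun m m' n => lact_add_left m m' (ract n p))
    (fun c m n => lact_smul_left c m (ract n p))
    (fun m n n' => by rw [ract_add_left, lact_add_right])
    (fun c m n => by rw [ract_smul_left, lact_smul_right]))

@[simp] lemma psiAct_tmul (p : Module.Dual k A) (m n : A) :
    psiAct p (m ⊗ₜ[k] n) = lact m (ract n p) := rfl

lemma psiAct_add (p q : Module.Dual k A) : psiAct (p + q) = psiAct p + psiAct q := by
  apply TensorProduct.ext'
  intro m n
  simp [ract_add_right, lact_add_right]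

lemma psiAct_smul (c : k) (p : Module.Dual k A) : psiAct (c • p) = c • psiAct p := by
  apply TensorProduct.ext'
  intro m n
  simp [ract_smul_right, lact_smul_right]

/-- The structural permutation `(u ⊗ v) ⊗ w ↦ (u ⊗ w) ⊗ v`. -/
noncomputable def sigmaSwap : (A ⊗[k] A) ⊗[k] A →ₗ[k] (A ⊗[k] A) ⊗[k] A :=
  (TensorProduct.assoc k A A A).symm.toLinearMap ∘ₗ
    LinearMap.lTensor A (TensorProduct.comm k A A).toLinearMap ∘ₗ
    (TensorProduct.assoc k A A A).toLinearMap

@[simp] lemma sigmaSwap_tmul (u v w : A) :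
    sigmaSwap (k := k) ((u ⊗ₜ[k] v) ⊗ₜ[k] w) = (u ⊗ₜ[k] w) ⊗ₜ[k] v := by
  simp [sigmaSwap]

/-- The map `(u ⊗ v) ⊗ w ↦ (u ⇀ p ↼ w) ⊗ v`. -/
noncomputable def kappa (p : Module.Dual k A) : (A ⊗[k] A) ⊗[k] A →ₗ[k] Module.Dual k A ⊗[k] A :=
  LinearMap.rTensor A (psiAct p) ∘ₗ sigmaSwap

@[simp] lemma kappa_tmul (p : Module.Dual k A) (u v w : A) :
    kappa p ((u ⊗ₜ[k] v) ⊗ₜ[k] w) = lact u (ract w p) ⊗ₜ[k] v := by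
  simp [kappa]

/-- The map `(u ⊗ v) ⊗ w ↦ (u ⇀ q ↼ S⁻¹(w)) ⊗ v`. -/
noncomputable def rhoMap (Sinv : A →ₗ[k] A) (q : Module.Dual k A) :
    (A ⊗[k] A) ⊗[k] A →ₗ[k] Module.Dual k A ⊗[k] A :=
  LinearMap.rTensor A (psiAct q ∘ₗ LinearMap.lTensor A Sinv) ∘ₗ sigmaSwap

@[simp] lemma rhoMap_tmul (Sinv : A →ₗ[k] A) (q : Module.Dual k A) (u v w : A) :
    rhoMap Sinv q ((u ⊗ₜ[k] v) ⊗ₜ[k] w) = lact u (ract (Sinv w) q) ⊗ₜ[k] v := by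
  simp [rhoMap]

lemma rhoMap_add (Sinv : A →ₗ[k] A) (q q' : Module.Dual k A) :
    rhoMap Sinv (q + q') = rhoMap Sinv q + rhoMap Sinv q' := by
  refine TensorProduct.ext_threefold fun u v w => ?_
  simp [ract_add_right, lact_add_right, TensorProduct.add_tmul]

lemma rhoMap_smul (Sinv : A →ₗ[k] A) (c : k) (q : Module.Dual k A) :
    rhoMap Sinv (c • q) = c • rhoMap Sinv q := by
  refine TensorProduct.ext_threefold fun u v w => ?_
  simp [ract_smul_right, lact_smul_right, TensorProduct.smul_tmul']

end Aux3

section Aux4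

open Coalgebra

variable {k A : Type*} [Field k] [Ring A] [HopfAlgebra k A]

lemma exists_fin2 (t : A ⊗[k] A) :
    ∃ (n : ℕ) (x y : Fin n → A), t = ∑ i, x i ⊗ₜ[k] y i := by
  obtain ⟨S, hS⟩ := TensorProduct.exists_finset t
  refine ⟨S.card, fun i => (S.equivFin.symm i).1.1, fun i => (S.equivFin.symm i).1.2, ?_⟩
  rw [hS, ← Finset.sum_attach S (fun p => p.1 ⊗ₜ[k] p.2)]
  exact (Equiv.sum_comp S.equivFin.symm fun p => (p : A × A).1 ⊗ₜ[k] (p : A × A).2).symm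

lemma exists_fin3 (t : (A ⊗[k] A) ⊗[k] A) :
    ∃ (n : ℕ) (x y z : Fin n → A), t = ∑ i, (x i ⊗ₜ[k] y i) ⊗ₜ[k] z i := by
  induction t using TensorProduct.induction_on with
  | zero => exact ⟨0, ![], ![], ![], by simp⟩
  | tmul u z =>
      obtain ⟨n, x, y, hu⟩ := exists_fin2 u
      exact ⟨n, x, y, fun _ => z, by rw [hu, TensorProduct.sum_tmul]⟩
  | add t₁ t₂ h₁ h₂ =>
      obtain ⟨n, x, y, z, h₁⟩ := h₁
      obtain ⟨m, x', y', z', h₂⟩ := h₂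
      refine ⟨n + m, Fin.append x x', Fin.append y y', Fin.append z z', ?_⟩
      rw [Fin.sum_univ_add]
      simp only [Fin.append_left, Fin.append_right]
      rw [← h₁, ← h₂]

variable (Sinv : A →ₗ[k] A)
  (mulD : Module.Dual k A ⊗[k] A →ₗ[k] Module.Dual k A ⊗[k] A →ₗ[k] Module.Dual k A ⊗[k] A)

lemma mulD_one (hS : IsAntipodeInverse k A Sinv) (hmulD : IsDoubleMul k A Sinv mulD)
    (p p' : Module.Dual k A) (a' : A) :
    mulD (p ⊗ₜ[k] (1 : A)) (p' ⊗ₜ[k] a') = conv p p' ⊗ₜ[k] a' := by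
  have hdec : LinearMap.rTensor A (Coalgebra.comul (R := k))
      (Coalgebra.comul (R := k) (1 : A))
      = ∑ _i : Fin 1, (((1 : A) ⊗ₜ[k] (1 : A)) ⊗ₜ[k] (1 : A)) := by
    rw [Bialgebra.comul_one, Algebra.TensorProduct.one_def]
    simp [Bialgebra.comul_one, Algebra.TensorProduct.one_def]
  have h := hmulD p p' 1 a' 1 (fun _ => 1) (fun _ => 1) (fun _ => 1) hdec
  rw [h]
  simp [Sinv_one Sinv hS, lact_one, ract_one]

lemma mulD_eps (hmulD : IsDoubleMul k A Sinv mulD) (b : A) (q : Module.Dual k A) :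
    mulD ((Coalgebra.counit (R := k) (A := A) : Module.Dual k A) ⊗ₜ[k] b) (q ⊗ₜ[k] (1 : A))
      = rhoMap Sinv q (D2 b) := by
  obtain ⟨n, x, y, z, ht⟩ := exists_fin3 (D2 (k := k) b)
  have h := hmulD (Coalgebra.counit (R := k) (A := A) : Module.Dual k A) q b 1 n x y z
    (by rw [← D2_apply]; exact ht)
  rw [h]
  calc ∑ i, conv (Coalgebra.counit (R := k) (A := A) : Module.Dual k A)
        (lact (x i) (ract (Sinv (z i)) q)) ⊗ₜ[k] (y i * 1)
      = ∑ i, rhoMap Sinv q ((x i ⊗ₜ[k] y i) ⊗ₜ[k] z i) := by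
        simp [conv_counit_left]
    _ = rhoMap Sinv q (D2 b) := by rw [← map_sum, ← ht]

/-- Bundled version of `rhoMap` in its `Dual` argument. -/
noncomputable def rhoMapL :
    Module.Dual k A →ₗ[k] ((A ⊗[k] A) ⊗[k] A →ₗ[k] Module.Dual k A ⊗[k] A) where
  toFun := rhoMap Sinv
  map_add' := rhoMap_add Sinv
  map_smul' := rhoMap_smul Sinv

lemma dual_sum {ι : Type*} [Fintype ι] (e : Module.Basis ι k A) (f : Module.Dual k A) :
    ∑ j, f (e j) • e.coord j = f := by
  refine LinearMap.ext fun x => ?_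
  simp only [LinearMap.sum_apply, LinearMap.smul_apply, Module.Basis.coord_apply, smul_eq_mul]
  conv_rhs => rw [← Module.Basis.sum_repr e x]
  rw [map_sum]
  simp [mul_comm]

lemma QD_eq (hS : IsAntipodeInverse k A Sinv) (hmulD : IsDoubleMul k A Sinv mulD)
    {ι : Type*} [Fintype ι] (e : Module.Basis ι k A) (a : A) (f : Module.Dual k A) :
    QD e mulD (a ⊗ₜ[k] f) = rhoMap Sinv f (D2 a) := by
  have hQD : QD e mulD (a ⊗ₜ[k] f)
      = ∑ i, ∑ j, pr a f
          (mulD (e.coord i ⊗ₜ[k] (1 : A))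
            ((Coalgebra.counit (R := k) (A := A) : Module.Dual k A) ⊗ₜ[k] e j))
        • mulD ((Coalgebra.counit (R := k) (A := A) : Module.Dual k A) ⊗ₜ[k] e i)
            (e.coord j ⊗ₜ[k] (1 : A)) := rfl
  rw [hQD]
  calc ∑ i, ∑ j, pr a f
          (mulD (e.coord i ⊗ₜ[k] (1 : A))
            ((Coalgebra.counit (R := k) (A := A) : Module.Dual k A) ⊗ₜ[k] e j))
        • mulD ((Coalgebra.counit (R := k) (A := A) : Module.Dual k A) ⊗ₜ[k] e i)
            (e.coord j ⊗ₜ[k] (1 : A))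
      = ∑ i, ∑ j, (e.coord i a * f (e j)) • rhoMap Sinv (e.coord j) (D2 (e i)) := by
        refine Finset.sum_congr rfl fun i _ => Finset.sum_congr rfl fun j _ => ?_
        rw [mulD_one Sinv mulD hS hmulD, conv_counit_right,
          mulD_eps Sinv mulD hmulD]
        rfl
    _ = ∑ i, e.coord i a • rhoMap Sinv f (D2 (e i)) := by
        refine Finset.sum_congr rfl fun i _ => ?_
        conv_rhs => rw [← dual_sum e f]
        rw [show rhoMap Sinv (∑ j, f (e j) • e.coord j) = rhoMapL Sinv (∑ j, f (e j) • e.coord j)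
          from rfl]
        rw [map_sum]
        simp only [map_smul, LinearMap.sum_apply, LinearMap.smul_apply, Finset.smul_sum]
        refine Finset.sum_congr rfl fun j _ => ?_
        rw [smul_smul]
        rfl
    _ = rhoMap Sinv f (D2 a) := by
        have : ∑ i, e.coord i a • rhoMap Sinv f (D2 (e i))
            = rhoMap Sinv f (D2 (∑ i, e.coord i a • e i)) := by
          rw [map_sum, map_sum]
          simp [map_smul]
        rw [this, show ∑ i, e.coord i a • e i = a from by
          simpa [Module.Basis.coord_apply] using e.sum_repr a]

end Aux4

section Aux5

open Coalgebra

variable {k A : Type*} [Field k] [Ring A] [HopfAlgebra k A]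

/-- First-stage collapse map for the inverse computation. -/
noncomputable def cOne (Sinv : A →ₗ[k] A) : A ⊗[k] A →ₗ[k] (A ⊗[k] A) ⊗[k] A :=
  LinearMap.rTensor A (LinearMap.rTensor A (gmap Sinv)) ∘ₗ
    LinearMap.rTensor A (TensorProduct.assoc k A A A).symm.toLinearMap ∘ₗ
    (TensorProduct.assoc k A (A ⊗[k] A) A).symm.toLinearMap ∘ₗ
    LinearMap.lTensor A (D2 (k := k) (A := A))

/-- Second-stage collapse map for the inverse computation. -/
noncomputable def phiTwo (Sinv : A →ₗ[k] A) :
    ((A ⊗[k] A) ⊗[k] A) ⊗[k] A →ₗ[k] (A ⊗[k] A) ⊗[k] A :=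
  LinearMap.lTensor (A ⊗[k] A) (gmap Sinv) ∘ₗ
    (TensorProduct.assoc k (A ⊗[k] A) A A).toLinearMap

/-- The composite map underlying `Q ∘ Q⁻¹`. -/
noncomputable def Theta (Sinv : A →ₗ[k] A) (p : Module.Dual k A) :
    (A ⊗[k] A) ⊗[k] A →ₗ[k] Module.Dual k A ⊗[k] A :=
  kappa p ∘ₗ phiTwo Sinv ∘ₗ LinearMap.rTensor A (cOne Sinv)

lemma Theta_aux (Sinv : A →ₗ[k] A) (p : Module.Dual k A) (x z : A) :
    kappa p ∘ₗ phiTwo Sinv ∘ₗ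
        (TensorProduct.mk k ((A ⊗[k] A) ⊗[k] A) A).flip z ∘ₗ
        LinearMap.rTensor A (LinearMap.rTensor A (gmap Sinv)) ∘ₗ
        LinearMap.rTensor A (TensorProduct.assoc k A A A).symm.toLinearMap ∘ₗ
        (TensorProduct.assoc k A (A ⊗[k] A) A).symm.toLinearMap ∘ₗ
        TensorProduct.mk k A ((A ⊗[k] A) ⊗[k] A) x
      = rhoMap Sinv (lact (Sinv x) (ract z p)) := by
  refine TensorProduct.ext_threefold fun u v w => ?_
  simp only [LinearMap.comp_apply, TensorProduct.mk_apply, LinearMap.flip_apply,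
    LinearEquiv.coe_coe, TensorProduct.assoc_symm_tmul, LinearMap.rTensor_tmul,
    gmap_tmul, rhoMap_tmul]
  rw [phiTwo]
  simp only [LinearMap.comp_apply, LinearEquiv.coe_coe, TensorProduct.assoc_tmul,
    LinearMap.lTensor_tmul, gmap_tmul, kappa_tmul]
  rw [act_act]

lemma Theta_tmul (Sinv : A →ₗ[k] A) (p : Module.Dual k A) (x y z : A) :
    Theta Sinv p ((x ⊗ₜ[k] y) ⊗ₜ[k] z)
      = rhoMap Sinv (lact (Sinv x) (ract z p)) (D2 y) := by
  have h := LinearMap.congr_fun (Theta_aux Sinv p x z) (D2 y)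
  simp only [LinearMap.comp_apply, TensorProduct.mk_apply, LinearMap.flip_apply] at h
  rw [Theta]
  simp only [LinearMap.comp_apply, LinearMap.rTensor_tmul]
  rw [cOne]
  simp only [LinearMap.comp_apply, LinearMap.lTensor_tmul]
  exact h

/-- The key identity `c₁ ∘ Δ = (1 ⊗ ·) ⊗ id ∘ Δ`. -/
lemma cOne_comul (Sinv : A →ₗ[k] A) (hS : IsAntipodeInverse k A Sinv) :
    cOne Sinv ∘ₗ Coalgebra.comul (R := k)
      = LinearMap.rTensor A ((TensorProduct.mk k A A) 1) ∘ₗ Coalgebra.comul (R := k) := by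
  have N2 : (TensorProduct.assoc k A (A ⊗[k] A) A).symm.toLinearMap ∘ₗ
        LinearMap.lTensor A (LinearMap.rTensor A (Coalgebra.comul (R := k)))
      = LinearMap.rTensor A (LinearMap.lTensor A (Coalgebra.comul (R := k))) ∘ₗ
        (TensorProduct.assoc k A A A).symm.toLinearMap := by
    refine ext_threefold_right (k := k) fun x m n => ?_
    simp only [LinearMap.comp_apply, LinearMap.lTensor_tmul, LinearMap.rTensor_tmul,
      LinearEquiv.coe_coe, TensorProduct.assoc_symm_tmul]
  have hF : ((LinearMap.rTensor A (gmap Sinv) ∘ₗ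
        (TensorProduct.assoc k A A A).symm.toLinearMap ∘ₗ
        LinearMap.lTensor A (Coalgebra.comul (R := k))) ∘ₗ Coalgebra.comul (R := k))
      = (TensorProduct.mk k A A) 1 := by
    refine LinearMap.ext fun y => ?_
    simp only [LinearMap.comp_apply, LinearEquiv.coe_coe]
    rw [Coalgebra.coassoc_symm_apply]
    exact LinearMap.congr_fun (L1M Sinv hS) y
  refine LinearMap.ext fun b => ?_
  simp only [LinearMap.comp_apply]
  rw [cOne]
  simp only [LinearMap.comp_apply]
  rw [show LinearMap.lTensor A (D2 (k := k) (A := A)) (Coalgebra.comul b)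
      = LinearMap.lTensor A (LinearMap.rTensor A (Coalgebra.comul (R := k)))
          (LinearMap.lTensor A (Coalgebra.comul (R := k)) (Coalgebra.comul b)) from by
    rw [show D2 (k := k) (A := A)
        = LinearMap.rTensor A (Coalgebra.comul (R := k)) ∘ₗ Coalgebra.comul (R := k) from rfl,
      LinearMap.lTensor_comp, LinearMap.comp_apply]]
  rw [← Coalgebra.coassoc_apply b]
  rw [show (TensorProduct.assoc k A (A ⊗[k] A) A).symm.toLinearMap
        (LinearMap.lTensor A (LinearMap.rTensor A (Coalgebra.comul (R := k)))
          ((TensorProduct.assoc k A A A)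
            (LinearMap.rTensor A (Coalgebra.comul (R := k)) (Coalgebra.comul b))))
      = LinearMap.rTensor A (LinearMap.lTensor A (Coalgebra.comul (R := k)))
          ((TensorProduct.assoc k A A A).symm ((TensorProduct.assoc k A A A)
            (LinearMap.rTensor A (Coalgebra.comul (R := k)) (Coalgebra.comul b)))) from
    LinearMap.congr_fun N2 _]
  rw [LinearEquiv.symm_apply_apply]
  rw [← LinearMap.comp_apply (LinearMap.rTensor A (TensorProduct.assoc k A A A).symm.toLinearMap),
    ← LinearMap.rTensor_comp]
  rw [← LinearMap.comp_apply (LinearMap.rTensor A _), ← LinearMap.rTensor_comp]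
  rw [← LinearMap.comp_apply (LinearMap.rTensor A _)
      (LinearMap.rTensor A (Coalgebra.comul (R := k))), ← LinearMap.rTensor_comp]
  rw [hF]

lemma Theta_D2 (Sinv : A →ₗ[k] A) (hS : IsAntipodeInverse k A Sinv)
    (p : Module.Dual k A) (a : A) :
    Theta Sinv p (D2 a) = p ⊗ₜ[k] a := by
  have N1 : (TensorProduct.assoc k (A ⊗[k] A) A A).toLinearMap ∘ₗ
        LinearMap.rTensor A (LinearMap.rTensor A ((TensorProduct.mk k A A) 1))
      = LinearMap.rTensor (A ⊗[k] A) ((TensorProduct.mk k A A) 1) ∘ₗ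
        (TensorProduct.assoc k A A A).toLinearMap := by
    refine TensorProduct.ext_threefold fun x y z => ?_
    simp only [LinearMap.comp_apply, LinearMap.rTensor_tmul, TensorProduct.mk_apply,
      LinearEquiv.coe_coe, TensorProduct.assoc_tmul]
  rw [Theta]
  simp only [LinearMap.comp_apply]
  -- step 1 : rewrite `rTensor (cOne)` applied to `D2 a`
  rw [show LinearMap.rTensor A (cOne Sinv) (D2 a)
      = LinearMap.rTensor A (LinearMap.rTensor A ((TensorProduct.mk k A A) 1)) (D2 a) from by
    rw [D2_apply, ← LinearMap.comp_apply (LinearMap.rTensor A (cOne Sinv)),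
      ← LinearMap.rTensor_comp, cOne_comul Sinv hS, LinearMap.rTensor_comp,
      LinearMap.comp_apply, ← D2_apply]]
  -- step 2 : move the `mk 1` outside and use coassociativity
  rw [phiTwo]
  simp only [LinearMap.comp_apply]
  have hN1 := LinearMap.congr_fun N1 (D2 (k := k) a)
  simp only [LinearMap.comp_apply, LinearEquiv.coe_coe] at hN1
  simp only [LinearEquiv.coe_coe]
  rw [hN1]
  rw [D2_apply, Coalgebra.coassoc_apply]
  rw [show LinearMap.lTensor (A ⊗[k] A) (gmap Sinv)
        (LinearMap.rTensor (A ⊗[k] A) ((TensorProduct.mk k A A) 1)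
          (LinearMap.lTensor A (Coalgebra.comul (R := k)) (Coalgebra.comul a)))
      = TensorProduct.map ((TensorProduct.mk k A A) 1) (gmap Sinv)
          (LinearMap.lTensor A (Coalgebra.comul (R := k)) (Coalgebra.comul a)) from by
    rw [← LinearMap.comp_apply, LinearMap.lTensor_comp_rTensor]]
  rw [show TensorProduct.map ((TensorProduct.mk k A A) 1) (gmap Sinv)
        (LinearMap.lTensor A (Coalgebra.comul (R := k)) (Coalgebra.comul a))
      = TensorProduct.map ((TensorProduct.mk k A A) 1)
          (gmap Sinv ∘ₗ Coalgebra.comul (R := k)) (Coalgebra.comul a) from by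
    rw [show LinearMap.lTensor A (Coalgebra.comul (R := k))
        = TensorProduct.map LinearMap.id (Coalgebra.comul (R := k)) from rfl,
      ← LinearMap.comp_apply, ← TensorProduct.map_comp, LinearMap.comp_id]]
  rw [gmap_comp_comul Sinv hS]
  -- step 3 : final counit collapse
  rw [← (ℛ k a).eq, map_sum, map_sum]
  calc ∑ i ∈ (ℛ k a).index, kappa p
        (TensorProduct.map ((TensorProduct.mk k A A) 1)
          (Algebra.linearMap k A ∘ₗ Coalgebra.counit (R := k))
          ((ℛ k a).left i ⊗ₜ[k] (ℛ k a).right i))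
      = ∑ i ∈ (ℛ k a).index, counit (R := k) ((ℛ k a).right i) • (p ⊗ₜ[k] (ℛ k a).left i) := by
        refine Finset.sum_congr rfl fun i _ => ?_
        rw [TensorProduct.map_tmul, TensorProduct.mk_apply, LinearMap.comp_apply,
          Algebra.linearMap_apply, Algebra.algebraMap_eq_smul_one, kappa_tmul,
          ract_smul_left, ract_one, lact_smul_right, lact_one, TensorProduct.smul_tmul']
    _ = p ⊗ₜ[k] a := by
        simp_rw [← TensorProduct.tmul_smul, ← TensorProduct.tmul_sum]
        rw [sum_counit_smul_left (ℛ k a)]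

end Aux5

/-- Let `A` be a finite-dimensional Hopf algebra over a field `k` with
bijective antipode `S`, `D(A)` its Drinfel'd double with R-matrix
`R = Σᵢ (ε ⊗ eᵢ) ⊗ (eⁱ ⊗ 1)`, and identify `D(A)*` with `A ⊗ A*` via
`⟨a ⊗ f, p ⊗ x⟩ = p(a) f(x)`.  Then the map `Q : D(A)* → D(A)`,
`Q(φ) = Σ φ(R² r¹) R¹ r²`, is given explicitly by
`Q(a ⊗ p) = Σ (a₁ ⇀ p ↼ S⁻¹(a₃)) ⊗ a₂`, and it is bijective with inverse
`Q⁻¹(p ⊗ a) = Σ a₂ ⊗ (S⁻¹(a₁) ⇀ p ↼ a₃)`; in particular `D(A)` is factorizable. -/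
theorem double_factorizable
    {k A : Type*} [Field k] [Ring A] [HopfAlgebra k A] [FiniteDimensional k A]
    (Sinv : A →ₗ[k] A) (hSinv : IsAntipodeInverse k A Sinv)
    {ι : Type*} [Fintype ι] (e : Module.Basis ι k A)
    (mulD : Module.Dual k A ⊗[k] A →ₗ[k] Module.Dual k A ⊗[k] A →ₗ[k]
      Module.Dual k A ⊗[k] A)
    (hmulD : IsDoubleMul k A Sinv mulD) :
    (∀ (a : A) (p : Module.Dual k A) (n : ℕ) (a₁ a₂ a₃ : Fin n → A),
        rTensor A (Coalgebra.comul (R := k)) (Coalgebra.comul (R := k) a)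
          = ∑ i, (a₁ i ⊗ₜ[k] a₂ i) ⊗ₜ[k] a₃ i →
        QD e mulD (a ⊗ₜ[k] p)
          = ∑ i, lact (a₁ i) (ract (Sinv (a₃ i)) p) ⊗ₜ[k] a₂ i)
    ∧ Function.Bijective (QD e mulD)
    ∧ (∀ (p : Module.Dual k A) (a : A) (n : ℕ) (a₁ a₂ a₃ : Fin n → A),
        rTensor A (Coalgebra.comul (R := k)) (Coalgebra.comul (R := k) a)
          = ∑ i, (a₁ i ⊗ₜ[k] a₂ i) ⊗ₜ[k] a₃ i →
        QD e mulD (∑ i, a₂ i ⊗ₜ[k] lact (Sinv (a₁ i)) (ract (a₃ i) p))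
          = p ⊗ₜ[k] a) := by
  classical
  have part1 : ∀ (a : A) (p : Module.Dual k A) (n : ℕ) (a₁ a₂ a₃ : Fin n → A),
      rTensor A (Coalgebra.comul (R := k)) (Coalgebra.comul (R := k) a)
        = ∑ i, (a₁ i ⊗ₜ[k] a₂ i) ⊗ₜ[k] a₃ i →
      QD e mulD (a ⊗ₜ[k] p)
        = ∑ i, lact (a₁ i) (ract (Sinv (a₃ i)) p) ⊗ₜ[k] a₂ i := by
    intro a p n a₁ a₂ a₃ hdec
    rw [QD_eq Sinv mulD hSinv hmulD e a p]
    rw [show D2 (k := k) a = ∑ i, (a₁ i ⊗ₜ[k] a₂ i) ⊗ₜ[k] a₃ i from by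
      rw [D2_apply]; exact hdec]
    rw [map_sum]
    simp only [rhoMap_tmul]
  have part3 : ∀ (p : Module.Dual k A) (a : A) (n : ℕ) (a₁ a₂ a₃ : Fin n → A),
      rTensor A (Coalgebra.comul (R := k)) (Coalgebra.comul (R := k) a)
        = ∑ i, (a₁ i ⊗ₜ[k] a₂ i) ⊗ₜ[k] a₃ i →
      QD e mulD (∑ i, a₂ i ⊗ₜ[k] lact (Sinv (a₁ i)) (ract (a₃ i) p)) = p ⊗ₜ[k] a := by
    intro p a n a₁ a₂ a₃ hdec
    rw [map_sum]
    calc ∑ i, QD e mulD (a₂ i ⊗ₜ[k] lact (Sinv (a₁ i)) (ract (a₃ i) p))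
        = ∑ i, rhoMap Sinv (lact (Sinv (a₁ i)) (ract (a₃ i) p)) (D2 (a₂ i)) := by
          exact Finset.sum_congr rfl fun i _ => QD_eq Sinv mulD hSinv hmulD e _ _
      _ = ∑ i, Theta Sinv p ((a₁ i ⊗ₜ[k] a₂ i) ⊗ₜ[k] a₃ i) := by
          exact Finset.sum_congr rfl fun i _ => (Theta_tmul Sinv p _ _ _).symm
      _ = Theta Sinv p (D2 a) := by
          rw [← map_sum, show D2 (k := k) a = ∑ i, (a₁ i ⊗ₜ[k] a₂ i) ⊗ₜ[k] a₃ i from by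
            rw [D2_apply]; exact hdec]
      _ = p ⊗ₜ[k] a := Theta_D2 Sinv hSinv p a
  have surj : Function.Surjective (QD e mulD) := by
    intro t
    induction t using TensorProduct.induction_on with
    | zero => exact ⟨0, map_zero _⟩
    | tmul p a =>
        obtain ⟨n, x, y, z, ht⟩ := exists_fin3 (D2 (k := k) a)
        exact ⟨∑ i, y i ⊗ₜ[k] lact (Sinv (x i)) (ract (z i) p),
          part3 p a n x y z (by rw [← D2_apply]; exact ht)⟩
    | add u v hu hv =>
        obtain ⟨u', hu'⟩ := hu
        obtain ⟨v', hv'⟩ := hv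
        exact ⟨u' + v', by rw [map_add, hu', hv']⟩
  have hfr : Module.finrank k (A ⊗[k] Module.Dual k A)
      = Module.finrank k (Module.Dual k A ⊗[k] A) := by
    rw [Module.finrank_tensorProduct, Module.finrank_tensorProduct,
      Subspace.dual_finrank_eq, mul_comm]
  exact ⟨part1,
    ⟨(LinearMap.injective_iff_surjective_of_finrank_eq_finrank (V := A ⊗[k] Module.Dual k A)
      (V₂ := Module.Dual k A ⊗[k] A) hfr (f := QD e mulD)).mpr surj, surj⟩, part3⟩
end
end

section
/- Let A be a finite-dimensional Hopf algebra over a field k with bijective antipode S, D(A) its Drinfel'd double with R-matrix R = Σᵢ (ε⊗eᵢ)⊗(eⁱ⊗1), Q : D(A)* = A⊗A* → D(A) the factorizability map, and W = Σᵢ (1⊗eⁱ)⊗(eᵢ⊗ε) ∈ (A⊗A*)⊗(A⊗A*) the canonical element of ℋ(A)⊗ℋ(A). Then (Q⊗Q)(W) = R₂₁ = Σᵢ (eⁱ⊗1)⊗(ε⊗eᵢ); equivalently, W = (Q⁻¹⊗Q⁻¹)(R₂₁). -/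
open TensorProduct LinearMap

noncomputable section

section Helpers
variable {k A : Type*} [Field k] [Ring A] [HopfAlgebra k A]

lemma tensor_expand {M : Type*} [AddCommGroup M] [Module k M]
    {ι : Type*} [Fintype ι] (e : Module.Basis ι k A) (t : M ⊗[k] A) :
    t = ∑ i, (TensorProduct.rid k M ((e.coord i).lTensor M t)) ⊗ₜ[k] e i := by
  induction t using TensorProduct.induction_on with
  | zero => simp
  | tmul m x =>
    simp only [lTensor_tmul, rid_tmul, Module.Basis.coord_apply]
    rw [show ∑ i, (e.repr x i • m) ⊗ₜ[k] e i = m ⊗ₜ[k] ∑ i, e.repr x i • e i by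
      rw [tmul_sum]; exact Finset.sum_congr rfl fun i _ => (smul_tmul _ _ _)]
    rw [← e.equivFun_apply] at *
    rw [show (∑ i, e.equivFun x i • e i) = x from e.sum_equivFun x]
  | add s t hs ht =>
    conv_lhs => rw [hs, ht]
    simp [map_add, add_tmul, Finset.sum_add_distrib]

lemma counit_antipode' (x : A) :
    Coalgebra.counit (R := k) (HopfAlgebra.antipode (R := k) x)
      = Coalgebra.counit (R := k) x := by
  set re := Coalgebra.Repr.arbitrary k x with hre
  set ind := re.index
  set l := re.left
  set r := re.right
  have h1 : ∑ i ∈ ind, HopfAlgebra.antipode (R := k) (l i) * r i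
      = algebraMap k A (Coalgebra.counit (R := k) x) :=
    HopfAlgebra.sum_antipode_mul_eq_algebraMap_counit re
  have h2 : ∑ i ∈ ind, (Coalgebra.counit (R := k) (r i)) • l i = x := by
    have h := congrArg (TensorProduct.rid k A) (Coalgebra.sum_tmul_counit_eq (R := k) re)
    rw [map_sum] at h
    simp only [TensorProduct.rid_tmul, one_smul] at h
    exact h
  have h3 := congrArg (Coalgebra.counit (R := k)) h1
  simp only [map_sum, Bialgebra.counit_mul] at h3
  calc Coalgebra.counit (R := k) (HopfAlgebra.antipode (R := k) x)
      = Coalgebra.counit (R := k) (HopfAlgebra.antipode (R := k)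
          (∑ i ∈ ind, (Coalgebra.counit (R := k) (r i)) • l i)) := by rw [h2]
    _ = ∑ i ∈ ind, Coalgebra.counit (R := k) (HopfAlgebra.antipode (R := k) (l i))
          * Coalgebra.counit (R := k) (r i) := by
        simp [map_sum, map_smul, smul_eq_mul, mul_comm]
    _ = Coalgebra.counit (R := k) x := by
        rw [h3]; simp [Algebra.algebraMap_eq_smul_one]


lemma Qc_one_tmul
    (Sinv : A →ₗ[k] A) (hSinv : IsAntipodeInverse k A Sinv)
    (Qc : A ⊗[k] Module.Dual k A →ₗ[k] Module.Dual k A ⊗[k] A)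
    (hQc : ∀ (a : A) (p : Module.Dual k A) (n : ℕ) (a₁ a₂ a₃ : Fin n → A),
      rTensor A (Coalgebra.comul (R := k)) (Coalgebra.comul (R := k) a)
        = ∑ i, (a₁ i ⊗ₜ[k] a₂ i) ⊗ₜ[k] a₃ i →
      Qc (a ⊗ₜ[k] p) = ∑ i, lact (a₁ i) (ract (Sinv (a₃ i)) p) ⊗ₜ[k] a₂ i)
    (p : Module.Dual k A) : Qc ((1 : A) ⊗ₜ[k] p) = p ⊗ₜ[k] (1 : A) := by
  have hd : rTensor A (Coalgebra.comul (R := k)) (Coalgebra.comul (R := k) (1 : A))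
      = ∑ _i : Fin 1, ((1 : A) ⊗ₜ[k] (1 : A)) ⊗ₜ[k] (1 : A) := by
    simp [Bialgebra.comul_one, Algebra.TensorProduct.one_def]
  have hS1 : HopfAlgebra.antipode (R := k) (1 : A) = 1 := by
    have := HopfAlgebra.mul_antipode_rTensor_comul_apply (R := k) (1 : A)
    simpa [Bialgebra.comul_one, Algebra.TensorProduct.one_def] using this
  have hSinv1 : Sinv (1 : A) = 1 := by
    have := hSinv.2 (1 : A)
    rwa [hS1] at this
  rw [hQc 1 p 1 (fun _ => 1) (fun _ => 1) (fun _ => 1) hd]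
  simp [lact, ract, hSinv1, LinearMap.mulLeft_one, LinearMap.mulRight_one]

lemma Qc_tmul_counit
    (Sinv : A →ₗ[k] A) (hSinv : IsAntipodeInverse k A Sinv)
    {ι : Type*} [Fintype ι] (e : Module.Basis ι k A)
    (Qc : A ⊗[k] Module.Dual k A →ₗ[k] Module.Dual k A ⊗[k] A)
    (hQc : ∀ (a : A) (p : Module.Dual k A) (n : ℕ) (a₁ a₂ a₃ : Fin n → A),
      rTensor A (Coalgebra.comul (R := k)) (Coalgebra.comul (R := k) a)
        = ∑ i, (a₁ i ⊗ₜ[k] a₂ i) ⊗ₜ[k] a₃ i →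
      Qc (a ⊗ₜ[k] p) = ∑ i, lact (a₁ i) (ract (Sinv (a₃ i)) p) ⊗ₜ[k] a₂ i)
    (a : A) :
    Qc (a ⊗ₜ[k] (Coalgebra.counit (R := k) (A := A) : Module.Dual k A))
      = (Coalgebra.counit (R := k) (A := A) : Module.Dual k A) ⊗ₜ[k] a := by
  classical
  set ε : Module.Dual k A := (Coalgebra.counit (R := k) (A := A) : Module.Dual k A) with hε
  set u : ι → A := fun i =>
    TensorProduct.rid k A ((e.coord i).lTensor A (Coalgebra.comul (R := k) a)) with hu
  set v : ι → ι → A := fun i j =>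
    TensorProduct.rid k A ((e.coord j).lTensor A (Coalgebra.comul (R := k) (u i))) with hv
  have hua : Coalgebra.comul (R := k) a = ∑ i, u i ⊗ₜ[k] e i := tensor_expand e _
  have huv : ∀ i, Coalgebra.comul (R := k) (u i) = ∑ j, v i j ⊗ₜ[k] e j :=
    fun i => tensor_expand e _
  set σ : Fin (Fintype.card (ι × ι)) ≃ ι × ι := (Fintype.equivFin (ι × ι)).symm with hσ
  have hd : rTensor A (Coalgebra.comul (R := k)) (Coalgebra.comul (R := k) a)
      = ∑ m, (v (σ m).1 (σ m).2 ⊗ₜ[k] e (σ m).2) ⊗ₜ[k] e (σ m).1 := by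
    rw [hua, map_sum]
    simp only [rTensor_tmul]
    rw [Equiv.sum_comp σ (fun q : ι × ι => (v q.1 q.2 ⊗ₜ[k] e q.2) ⊗ₜ[k] e q.1),
      Fintype.sum_prod_type]
    refine Finset.sum_congr rfl fun i _ => ?_
    rw [huv i, sum_tmul]
  rw [hQc a ε _ (fun m => v (σ m).1 (σ m).2) (fun m => e (σ m).2) (fun m => e (σ m).1) hd]
  have hract : ∀ b : A, ract (k := k) b ε = Coalgebra.counit (R := k) b • ε := by
    intro b; ext x
    simp [ract, hε, Bialgebra.counit_mul, smul_eq_mul]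
  have hlact : ∀ c : A, lact (k := k) c ε = Coalgebra.counit (R := k) c • ε := by
    intro c; ext x
    simp [lact, hε, Bialgebra.counit_mul, smul_eq_mul, mul_comm]
  have hεSinv : ∀ b : A, Coalgebra.counit (R := k) (Sinv b) = Coalgebra.counit (R := k) b := by
    intro b
    have := counit_antipode' (k := k) (Sinv b)
    rw [hSinv.1 b] at this
    exact this.symm
  have hterm : ∀ m, lact (v (σ m).1 (σ m).2) (ract (Sinv (e (σ m).1)) ε) ⊗ₜ[k] e (σ m).2
      = (Coalgebra.counit (R := k) (e (σ m).1)) •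
        ((Coalgebra.counit (R := k) (v (σ m).1 (σ m).2)) • (ε ⊗ₜ[k] e (σ m).2)) := by
    intro m
    rw [hract, hεSinv]
    have : lact (k := k) (v (σ m).1 (σ m).2) (Coalgebra.counit (R := k) (e (σ m).1) • ε)
        = Coalgebra.counit (R := k) (e (σ m).1) • lact (v (σ m).1 (σ m).2) ε := by
      simp [lact, LinearMap.smul_comp]
    rw [this, hlact]
    simp only [TensorProduct.smul_tmul', smul_smul]
  rw [Finset.sum_congr rfl fun m _ => hterm m]
  rw [Equiv.sum_comp σ (fun q : ι × ι =>
    (Coalgebra.counit (R := k) (e q.1)) •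
      ((Coalgebra.counit (R := k) (v q.1 q.2)) • (ε ⊗ₜ[k] e q.2))), Fintype.sum_prod_type]
  have hinner : ∀ i, ∑ j, (Coalgebra.counit (R := k) (v i j)) • e j = u i := by
    intro i
    have h := congrArg (TensorProduct.lid k A)
      (congrArg ((Coalgebra.counit (R := k) (A := A)).rTensor A) (huv i))
    rw [Coalgebra.rTensor_counit_comul, map_sum] at h
    simp only [rTensor_tmul, TensorProduct.lid_tmul] at h
    simpa using h.symm
  have houter : ∑ i, (Coalgebra.counit (R := k) (e i)) • u i = a := by
    have h := congrArg (TensorProduct.rid k A)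
      (congrArg ((Coalgebra.counit (R := k) (A := A)).lTensor A) hua)
    rw [Coalgebra.lTensor_counit_comul, map_sum] at h
    simp only [lTensor_tmul, TensorProduct.rid_tmul] at h
    simpa using h.symm
  calc ∑ i, ∑ j, (Coalgebra.counit (R := k) (e i)) •
        ((Coalgebra.counit (R := k) (v i j)) • (ε ⊗ₜ[k] e j))
      = ∑ i, (Coalgebra.counit (R := k) (e i)) •
          (ε ⊗ₜ[k] ∑ j, (Coalgebra.counit (R := k) (v i j)) • e j) := by
        refine Finset.sum_congr rfl fun i _ => ?_
        rw [← Finset.smul_sum, tmul_sum]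
        congr 1
        refine Finset.sum_congr rfl fun j _ => ?_
        rw [tmul_smul]
    _ = ε ⊗ₜ[k] ∑ i, (Coalgebra.counit (R := k) (e i)) • u i := by
        rw [tmul_sum]
        refine Finset.sum_congr rfl fun i _ => ?_
        rw [hinner i, tmul_smul]
    _ = ε ⊗ₜ[k] a := by rw [houter]

end Helpers

/-- Let `A` be a finite-dimensional Hopf algebra over a field `k` with
bijective antipode `S`, `D(A)` its Drinfel'd double with R-matrix
`R = Σᵢ (ε ⊗ eᵢ) ⊗ (eⁱ ⊗ 1)`, `Q : A ⊗ A* → D(A)` the factorizability map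
(`Q(a ⊗ p) = Σ (a₁ ⇀ p ↼ S⁻¹(a₃)) ⊗ a₂`, with inverse `Q⁻¹`), and
`W = Σᵢ (1 ⊗ eⁱ) ⊗ (eᵢ ⊗ ε)` the canonical element of `ℋ(A) ⊗ ℋ(A)`.
Then `(Q ⊗ Q)(W) = R₂₁ = Σᵢ (eⁱ ⊗ 1) ⊗ (ε ⊗ eᵢ)`; equivalently
`W = (Q⁻¹ ⊗ Q⁻¹)(R₂₁)`. -/
theorem canonical_element_from_Rmatrix
    {k A : Type*} [Field k] [Ring A] [HopfAlgebra k A] [FiniteDimensional k A]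
    (Sinv : A →ₗ[k] A) (hSinv : IsAntipodeInverse k A Sinv)
    {ι : Type*} [Fintype ι] (e : Module.Basis ι k A)
    (Qc : A ⊗[k] Module.Dual k A →ₗ[k] Module.Dual k A ⊗[k] A)
    (hQc : ∀ (a : A) (p : Module.Dual k A) (n : ℕ) (a₁ a₂ a₃ : Fin n → A),
      rTensor A (Coalgebra.comul (R := k)) (Coalgebra.comul (R := k) a)
        = ∑ i, (a₁ i ⊗ₜ[k] a₂ i) ⊗ₜ[k] a₃ i →
      Qc (a ⊗ₜ[k] p) = ∑ i, lact (a₁ i) (ract (Sinv (a₃ i)) p) ⊗ₜ[k] a₂ i)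
    (Qcinv : Module.Dual k A ⊗[k] A →ₗ[k] A ⊗[k] Module.Dual k A)
    (hQbij₁ : ∀ w, Qcinv (Qc w) = w) (hQbij₂ : ∀ z, Qc (Qcinv z) = z) :
    TensorProduct.map Qc Qc
        (∑ i, ((1 : A) ⊗ₜ[k] e.coord i)
          ⊗ₜ[k] (e i ⊗ₜ[k] (Coalgebra.counit (R := k) (A := A) : Module.Dual k A)))
      = ∑ i, (e.coord i ⊗ₜ[k] (1 : A))
          ⊗ₜ[k] ((Coalgebra.counit (R := k) (A := A) : Module.Dual k A) ⊗ₜ[k] e i)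
    ∧ ∑ i, ((1 : A) ⊗ₜ[k] e.coord i)
          ⊗ₜ[k] (e i ⊗ₜ[k] (Coalgebra.counit (R := k) (A := A) : Module.Dual k A))
      = TensorProduct.map Qcinv Qcinv
          (∑ i, (e.coord i ⊗ₜ[k] (1 : A))
            ⊗ₜ[k] ((Coalgebra.counit (R := k) (A := A) : Module.Dual k A) ⊗ₜ[k] e i)) := by
  classical
  have hW1 : TensorProduct.map Qc Qc
        (∑ i, ((1 : A) ⊗ₜ[k] e.coord i)
          ⊗ₜ[k] (e i ⊗ₜ[k] (Coalgebra.counit (R := k) (A := A) : Module.Dual k A)))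
      = ∑ i, (e.coord i ⊗ₜ[k] (1 : A))
          ⊗ₜ[k] ((Coalgebra.counit (R := k) (A := A) : Module.Dual k A) ⊗ₜ[k] e i) := by
    rw [map_sum]
    refine Finset.sum_congr rfl fun i _ => ?_
    rw [TensorProduct.map_tmul, Qc_one_tmul Sinv hSinv Qc hQc (e.coord i),
      Qc_tmul_counit Sinv hSinv e Qc hQc (e i)]
  refine ⟨hW1, ?_⟩
  have hid : TensorProduct.map Qcinv Qcinv ∘ₗ TensorProduct.map Qc Qc
      = LinearMap.id := by
    rw [← TensorProduct.map_comp,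
      show Qcinv ∘ₗ Qc = LinearMap.id from LinearMap.ext hQbij₁]
    exact TensorProduct.map_id
  rw [← hW1, ← LinearMap.comp_apply, hid, LinearMap.id_apply]
end
end
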